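/- arXiv:0803.3840 — 7 statements merged into one kernel-verified Lean document; each statement's English description precedes it below -/
import Mathlib

section
/- Every finite poset P whose Hasse diagram is a tree is an induced subposet of some finite saturated poset P̃ of the same height whose Hasse diagram is also a tree. -/
/-!
Fix a strictly monotone rank `r : P → ℕ` with values below `h` (such as the height function).
Replace every `x` by a column of copies `(x, i)`: it starts just above the lowest rank of a lower
cover of `x` (at `0` if `x` is minimal) and ends at `r x`, or at `h - 1` if `x` is maximal.
Consecutive copies in a column are covers, and `(x, r x) ⋖ (y, r x + 1)` for every `x ⋖ y`.
Then `x ↦ (x, r x)` is an order embedding and the level is a grading in which minimal elements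
sit at level `0` and maximal ones at level `h - 1`, so every maximal chain meets every level once.
Each column is a path and the cross covers correspond to the edges of `H(P)`, so the new Hasse
diagram is connected with one edge fewer than vertices: a tree.
-/

/-- A finite poset (here: the type `α`) has height `h` if `h` is the maximum number of
elements of a chain in `α`. -/
def HasHeight (α : Type*) [Preorder α] (h : ℕ) : Prop :=
  (∃ c : Finset α, IsChain (· ≤ ·) (c : Set α) ∧ c.card = h) ∧
    ∀ c : Finset α, IsChain (· ≤ ·) (c : Set α) → c.card ≤ h

/-- A maximal chain: a chain not properly contained in any other chain. -/
def IsMaxChainF {α : Type*} [Preorder α] (c : Finset α) : Prop :=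
  IsChain (· ≤ ·) (c : Set α) ∧
    ∀ d : Finset α, IsChain (· ≤ ·) (d : Set α) → c ⊆ d → c = d

open Finset Relation

section MaxChain

variable {P : Type*} [Preorder P]

lemma IsMaxChainF.mem_of_forall_comparable {c : Finset P} (hc : IsMaxChainF c) {z : P}
    (hz : ∀ x ∈ c, x ≤ z ∨ z ≤ x) : z ∈ c := by
  classical
  have hchain : IsChain (· ≤ ·) ((insert z c : Finset P) : Set P) := by
    rw [coe_insert]
    exact hc.1.insert fun x hx _ => (hz x hx).symm
  rw [hc.2 _ hchain (subset_insert z c)]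
  exact mem_insert_self z c

lemma IsMaxChainF.nonempty [Nonempty P] {c : Finset P} (hc : IsMaxChainF c) : c.Nonempty := by
  rw [nonempty_iff_ne_empty]
  rintro rfl
  exact notMem_empty _ (hc.mem_of_forall_comparable (z := Classical.arbitrary P) (by simp))

end MaxChain

section Graded

variable {P : Type*} [PartialOrder P] [GradeOrder ℕ P] {h : ℕ}

lemma IsChain.le_of_grade_le {c : Set P} (hc : IsChain (· ≤ ·) c) {a b : P} (ha : a ∈ c)
    (hb : b ∈ c) (hab : grade ℕ a ≤ grade ℕ b) : a ≤ b := by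
  obtain rfl | hne := eq_or_ne a b
  · exact le_rfl
  · exact (hc ha hb hne).resolve_right fun hba =>
      (hab.trans_lt (grade_strictMono (hba.lt_of_ne hne.symm))).false

lemma IsChain.finsetCard_le {c : Finset P} (hc : IsChain (· ≤ ·) (c : Set P))
    (hlt : ∀ a : P, grade ℕ a < h) : c.card ≤ h := by
  classical
  have hinj : Set.InjOn (grade ℕ) (c : Set P) := fun a ha b hb hab =>
    (hc.le_of_grade_le ha hb hab.le).antisymm (hc.le_of_grade_le hb ha hab.ge)
  calc c.card = (c.image (grade ℕ)).card := (card_image_of_injOn hinj).symm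
    _ ≤ (range h).card := card_le_card fun k hk => by
        obtain ⟨a, -, rfl⟩ := mem_image.mp hk
        exact mem_range.mpr (hlt a)
    _ = h := card_range h

lemma exists_covBy_le_of_forall_lt {c : Finset P} {a : P} (ha : ¬ IsMax a)
    (hc : IsChain (· ≤ ·) (c : Set P)) : ∃ z, a ⋖ z ∧ ∀ x ∈ c, a < x → z ≤ x := by
  classical
  have := GradeOrder.wellFoundedLT ℕ (α := P)
  obtain hS | ⟨b, hb, hbmin⟩ := (c.filter (a < ·)).eq_empty_or_nonempty.imp id
    fun hS => exists_min_image _ (grade ℕ) hS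
  · obtain ⟨z, hz⟩ := exists_covBy_of_wellFoundedLT ha
    exact ⟨z, hz, fun x hx hax => absurd (mem_filter.mpr ⟨hx, hax⟩) (by simp [hS])⟩
  · rw [mem_filter] at hb
    obtain ⟨z, hz, hzb⟩ := exists_covBy_le_of_lt hb.2
    exact ⟨z, hz, fun x hx hax =>
      hzb.trans (hc.le_of_grade_le hb.1 hx (hbmin x (mem_filter.mpr ⟨hx, hax⟩)))⟩

lemma IsMaxChainF.exists_grade_eq [Nonempty P] {c : Finset P} (hc : IsMaxChainF c)
    (hmin : ∀ a : P, IsMin a → grade ℕ a = 0) (hmax : ∀ a : P, IsMax a → grade ℕ a + 1 = h) :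
    ∀ k < h, ∃ a ∈ c, grade ℕ a = k := by
  intro k hk
  induction k with
  | zero =>
    obtain ⟨m, hm, hmin'⟩ := exists_min_image c (grade ℕ) hc.nonempty
    refine ⟨m, hm, hmin m fun b hbm => ?_⟩
    have hb : b ∈ c := hc.mem_of_forall_comparable fun x hx =>
      Or.inr (hbm.trans (hc.1.le_of_grade_le hm hx (hmin' x hx)))
    exact hc.1.le_of_grade_le hm hb (hmin' b hb)
  | succ k ih =>
    obtain ⟨a, ha, rfl⟩ := ih (by omega)
    obtain ⟨z, haz, hz⟩ := exists_covBy_le_of_forall_lt (fun hamax => by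
      have := hmax a hamax; omega) hc.1
    refine ⟨z, hc.mem_of_forall_comparable fun x hx => ?_, ?_⟩
    · rcases le_or_gt (grade ℕ x) (grade ℕ a) with hxa | hax
      · exact Or.inl ((hc.1.le_of_grade_le hx ha hxa).trans haz.le)
      · exact Or.inr (hz x hx (hc.1.le_of_grade_le ha hx hax.le |>.lt_of_ne
          fun he => by rw [he] at hax; exact hax.false))
    · exact (Nat.covBy_iff_add_one_eq.mp (haz.grade ℕ)).symm

lemma IsMaxChainF.card_eq [Nonempty P] {c : Finset P} (hc : IsMaxChainF c)
    (hlt : ∀ a : P, grade ℕ a < h) (hmin : ∀ a : P, IsMin a → grade ℕ a = 0)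
    (hmax : ∀ a : P, IsMax a → grade ℕ a + 1 = h) : c.card = h := by
  classical
  refine le_antisymm (hc.1.finsetCard_le hlt) ?_
  calc h = (range h).card := (card_range h).symm
    _ ≤ (c.image (grade ℕ)).card := card_le_card fun k hk => by
        obtain ⟨a, ha, rfl⟩ := hc.exists_grade_eq hmin hmax k (mem_range.mp hk)
        exact mem_image_of_mem _ ha
    _ ≤ c.card := card_image_le

end Graded

section Height

variable {α : Type*} [PartialOrder α] {h : ℕ}

lemma height_lt_of_hasHeight (hh : HasHeight α h) (x : α) : Order.height x < h := by
  classical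
  by_contra! hle
  obtain ⟨p, -, hp⟩ := Order.exists_series_of_le_height x hle
  have hchain : IsChain (· ≤ ·) ((univ.image p : Finset α) : Set α) := by
    rw [coe_image, coe_univ, Set.image_univ]
    exact p.strictMono.monotone.isChain_range
  have := hh.2 _ hchain
  rw [card_image_of_injective _ p.strictMono.injective, card_univ, Fintype.card_fin] at this
  omega

lemma exists_strictMono_lt_of_hasHeight (hh : HasHeight α h) :
    ∃ r : α → ℕ, StrictMono r ∧ ∀ x, r x < h := by
  have hfin (x : α) : Order.height x = (Order.height x).toNat :=
    (ENat.natCast_toNat (height_lt_of_hasHeight hh x).ne_top).symm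
  refine ⟨fun x => (Order.height x).toNat, fun x y hxy => ?_, fun x => ?_⟩
  · have := Order.height_strictMono hxy (height_lt_of_hasHeight hh x |>.trans_le le_top)
    rwa [hfin x, hfin y, Nat.cast_lt] at this
  · have := height_lt_of_hasHeight hh x
    rwa [hfin x, Nat.cast_lt] at this

end Height

lemma SimpleGraph.card_edgeSet_hasse (P : Type*) [Preorder P] :
    Nat.card (hasse P).edgeSet = Nat.card {p : P × P // p.1 ⋖ p.2} := by
  symm
  refine Nat.card_eq_of_bijective (fun p => ⟨s(p.1.1, p.1.2), hasse_adj.mpr (Or.inl p.2)⟩)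
    ⟨?_, ?_⟩
  · rintro ⟨⟨a, b⟩, hab⟩ ⟨⟨c, d⟩, hcd⟩ he
    obtain ⟨rfl, rfl⟩ | ⟨rfl, rfl⟩ := Sym2.eq_iff.mp (congrArg Subtype.val he)
    · rfl
    · exact absurd hab.lt hcd.lt.not_gt
  · rintro ⟨e, he⟩
    induction e using Sym2.ind with
    | _ a b =>
      rcases hasse_adj.mp he with hab | hba
      · exact ⟨⟨(a, b), hab⟩, rfl⟩
      · exact ⟨⟨(b, a), hba⟩, Subtype.ext Sym2.eq_swap⟩

section Saturation

variable {α : Type*} [PartialOrder α] (r : α → ℕ) (h : ℕ)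

def InColumn (x : α) (i : ℕ) : Prop :=
  i < h ∧ (i ≤ r x ∨ IsMax x) ∧ (IsMin x ∨ ∃ q, q ⋖ x ∧ r q < i)

@[ext]
structure Saturation where
  elt : α
  level : ℕ
  inColumn : InColumn r h elt level

variable {r h}

lemma InColumn.of_le_of_le {x : α} {i j k : ℕ} (hi : InColumn r h x i) (hk : InColumn r h x k)
    (hij : i ≤ j) (hjk : j ≤ k) : InColumn r h x j := by
  obtain ⟨-, -, hlow⟩ := hi
  obtain ⟨hkh, hup, -⟩ := hk
  refine ⟨by omega, hup.imp_left (hjk.trans ·), hlow.imp_right ?_⟩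
  rintro ⟨q, hq, hqi⟩
  exact ⟨q, hq, by omega⟩

lemma inColumn_rank [Finite α] (hr : StrictMono r) (hrh : ∀ x, r x < h) (x : α) :
    InColumn r h x (r x) := by
  refine ⟨hrh x, Or.inl le_rfl, or_iff_not_imp_left.mpr fun hx => ?_⟩
  obtain ⟨q, hq⟩ := exists_covBy_of_wellFoundedGT hx
  exact ⟨q, hq, hr hq.lt⟩

lemma inColumn_rank_add_one_of_covBy (hr : StrictMono r) (hrh : ∀ x, r x < h) {x y : α}
    (hxy : x ⋖ y) : InColumn r h y (r x + 1) :=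
  ⟨lt_of_le_of_lt (hr hxy.lt) (hrh y), Or.inl (hr hxy.lt), Or.inr ⟨x, hxy, Nat.lt_succ_self _⟩⟩

namespace Saturation

instance [Finite α] : Finite (Saturation r h) :=
  Finite.of_injective (fun a => (a.elt, (⟨a.level, a.inColumn.1⟩ : Fin h))) fun a b hab => by
    simp only [Prod.mk.injEq, Fin.mk.injEq] at hab
    exact Saturation.ext hab.1 hab.2

def Step (a b : Saturation r h) : Prop :=
  a.level + 1 = b.level ∧ (a.elt = b.elt ∨ a.elt ⋖ b.elt ∧ a.level = r a.elt)

lemma eq_or_level_lt_of_reflTransGen {a b : Saturation r h} (hab : ReflTransGen Step a b) :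
    a = b ∨ a.level < b.level := by
  induction hab with
  | refl => exact Or.inl rfl
  | tail _ hbc ih =>
    have := hbc.1
    exact Or.inr (by rcases ih with rfl | ih <;> omega)

instance : PartialOrder (Saturation r h) where
  le := ReflTransGen Step
  le_refl _ := .refl
  le_trans _ _ _ := ReflTransGen.trans
  le_antisymm _ _ hab hba := by
    rcases eq_or_level_lt_of_reflTransGen hab with hab | hab
    · exact hab
    rcases eq_or_level_lt_of_reflTransGen hba with hba | hba
    · exact hba.symm
    · omega

lemma le_iff_reflTransGen {a b : Saturation r h} : a ≤ b ↔ ReflTransGen Step a b := Iff.rfl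

lemma level_strictMono : StrictMono (level : Saturation r h → ℕ) := fun _ _ hab =>
  (eq_or_level_lt_of_reflTransGen hab.le).resolve_left hab.ne

lemma Step.lt {a b : Saturation r h} (hab : Step a b) : a < b :=
  lt_of_le_of_ne (le_iff_reflTransGen.mpr (.single hab)) fun he => by
    have := hab.1
    rw [he] at this
    omega

lemma covBy_iff_step {a b : Saturation r h} : a ⋖ b ↔ Step a b := by
  refine ⟨fun hab => ?_, fun hab => ⟨hab.lt, fun c hac hcb => ?_⟩⟩
  · rcases ReflTransGen.cases_head (le_iff_reflTransGen.mp hab.le) with he | ⟨c, hac, hcb⟩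
    · exact absurd he hab.ne
    · obtain rfl | hcb := eq_or_lt_of_le (le_iff_reflTransGen.mpr hcb)
      · exact hac
      · exact absurd hcb (hab.2 hac.lt)
  · have := level_strictMono hac
    have := level_strictMono hcb
    have := hab.1
    omega

instance : GradeOrder ℕ (Saturation r h) where
  grade := level
  grade_strictMono := level_strictMono
  covBy_grade _ _ hab := Nat.covBy_iff_add_one_eq.mpr (covBy_iff_step.mp hab).1

lemma elt_mono : Monotone (elt : Saturation r h → α) := by
  intro a b hab
  rw [le_iff_reflTransGen] at hab
  induction hab with
  | refl => exact le_rfl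
  | tail _ hbc ih => exact ih.trans (hbc.2.elim (fun he => he.le) fun hc => hc.1.le)

lemma le_of_elt_eq_of_level_le {a b : Saturation r h} (helt : a.elt = b.elt)
    (hlevel : a.level ≤ b.level) : a ≤ b := by
  obtain ⟨n, hn⟩ := Nat.exists_eq_add_of_le hlevel
  induction n generalizing b with
  | zero => exact (Saturation.ext helt hn.symm).le
  | succ n ih =>
    let c : Saturation r h := ⟨a.elt, a.level + n,
      a.inColumn.of_le_of_le (helt ▸ b.inColumn) (by omega) (by omega)⟩
    have hcb : Step c b := ⟨by dsimp only [c]; omega, Or.inl helt⟩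
    exact (ih (b := c) rfl (Nat.le_add_right _ _) rfl).trans (le_iff_reflTransGen.mpr (.single hcb))

lemma reachable_of_le {a b : Saturation r h} (hab : a ≤ b) :
    (SimpleGraph.hasse (Saturation r h)).Reachable a b := by
  rw [SimpleGraph.reachable_iff_reflTransGen]
  exact ReflTransGen.mono
    (fun _ _ hs => SimpleGraph.hasse_adj.mpr (Or.inl (covBy_iff_step.mpr hs))) _ _ hab

variable [Finite α] (hr : StrictMono r) (hrh : ∀ x, r x < h)

def embed (x : α) : Saturation r h := ⟨x, r x, inColumn_rank hr hrh x⟩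

variable {hr hrh}

lemma embed_le_embed_of_covBy {x y : α} (hxy : x ⋖ y) : embed hr hrh x ≤ embed hr hrh y := by
  let b : Saturation r h := ⟨y, r x + 1, inColumn_rank_add_one_of_covBy hr hrh hxy⟩
  have hstep : Step (embed hr hrh x) b := ⟨rfl, Or.inr ⟨hxy, rfl⟩⟩
  exact hstep.lt.le.trans (le_of_elt_eq_of_level_le rfl (hr hxy.lt))

lemma embed_mono : Monotone (embed hr hrh) := by
  have := Fintype.ofFinite α
  classical
  let := Fintype.toLocallyFiniteOrder (α := α)
  intro x y hxy
  exact (le_iff_reflTransGen_covBy.mp hxy).lift' _ (fun _ _ hc =>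
    le_iff_reflTransGen.mp (embed_le_embed_of_covBy hc)) |> le_iff_reflTransGen.mpr

lemma embed_le_embed_iff {x y : α} : embed hr hrh x ≤ embed hr hrh y ↔ x ≤ y :=
  ⟨fun hxy => elt_mono hxy, fun hxy => embed_mono hxy⟩

lemma embed_injective : Function.Injective (embed hr hrh) :=
  fun _ _ hxy => congrArg elt hxy

lemma le_embed_elt_or_embed_elt_le (a : Saturation r h) :
    a ≤ embed hr hrh a.elt ∨ embed hr hrh a.elt ≤ a :=
  (le_total a.level (r a.elt)).imp (le_of_elt_eq_of_level_le rfl) (le_of_elt_eq_of_level_le rfl)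

lemma connected_hasse (hr : StrictMono r) (hrh : ∀ x, r x < h)
    (hα : (SimpleGraph.hasse α).Connected) : (SimpleGraph.hasse (Saturation r h)).Connected := by
  have : Nonempty (Saturation r h) := ⟨embed hr hrh hα.nonempty.some⟩
  have reach_embed (a : Saturation r h) :
      (SimpleGraph.hasse (Saturation r h)).Reachable a (embed hr hrh a.elt) :=
    (le_embed_elt_or_embed_elt_le a).elim reachable_of_le fun hle => (reachable_of_le hle).symm
  have reach_embed_of_adj {x y : α} (hxy : (SimpleGraph.hasse α).Adj x y) :
      ReflTransGen (SimpleGraph.hasse (Saturation r h)).Adj (embed hr hrh x) (embed hr hrh y) := by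
    rw [← SimpleGraph.reachable_iff_reflTransGen]
    rcases SimpleGraph.hasse_adj.mp hxy with hxy | hyx
    · exact reachable_of_le (embed_le_embed_of_covBy hxy)
    · exact (reachable_of_le (embed_le_embed_of_covBy hyx)).symm
  refine ⟨fun a b => (reach_embed a).trans (SimpleGraph.Reachable.trans ?_ (reach_embed b).symm)⟩
  rw [SimpleGraph.reachable_iff_reflTransGen]
  exact ReflTransGen.lift' (embed hr hrh) (fun _ _ => reach_embed_of_adj) _ _
    ((SimpleGraph.reachable_iff_reflTransGen _ _).mp (hα.preconnected a.elt b.elt))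

lemma level_eq_zero_of_isMin (hr : StrictMono r) (hrh : ∀ x, r x < h) {a : Saturation r h}
    (ha : IsMin a) : a.level = 0 := by
  obtain ⟨x, i, hx⟩ := a
  by_contra hi
  obtain ⟨i, rfl⟩ := Nat.exists_eq_succ_of_ne_zero hi
  suffices ∃ b, Step b ⟨x, i + 1, hx⟩ by
    obtain ⟨b, hb⟩ := this
    exact hb.lt.not_ge (ha hb.lt.le)
  obtain ⟨hxh, hup, hlow⟩ := hx
  by_cases hcol : InColumn r h x i
  · exact ⟨⟨x, i, hcol⟩, rfl, Or.inl rfl⟩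
  have hcol' (hlow' : IsMin x ∨ ∃ q, q ⋖ x ∧ r q < i) : InColumn r h x i :=
    ⟨by omega, hup.imp_left Nat.le_of_succ_le, hlow'⟩
  obtain ⟨q, hq, hqi⟩ := hlow.resolve_left fun hmin => hcol (hcol' (Or.inl hmin))
  obtain rfl : r q = i := by
    by_contra hne
    exact hcol (hcol' (Or.inr ⟨q, hq, by omega⟩))
  exact ⟨embed hr hrh q, rfl, Or.inr ⟨hq, rfl⟩⟩

lemma level_add_one_eq_of_isMax (hr : StrictMono r) (hrh : ∀ x, r x < h) {a : Saturation r h}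
    (ha : IsMax a) : a.level + 1 = h := by
  obtain ⟨x, i, hx⟩ := a
  have hih := hx.1
  show i + 1 = h
  by_contra hne
  suffices ∃ b, Step ⟨x, i, hx⟩ b by
    obtain ⟨b, hb⟩ := this
    exact hb.lt.not_ge (ha hb.lt.le)
  have hcol (hup : i + 1 ≤ r x ∨ IsMax x) : InColumn r h x (i + 1) :=
    ⟨by omega, hup, hx.2.2.imp_right fun ⟨q, hq, hqi⟩ => ⟨q, hq, by omega⟩⟩
  by_cases hxmax : IsMax x
  · exact ⟨⟨x, i + 1, hcol (Or.inr hxmax)⟩, rfl, Or.inl rfl⟩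
  obtain hlt | rfl := (hx.2.1.resolve_right hxmax).lt_or_eq
  · exact ⟨⟨x, i + 1, hcol (Or.inl hlt)⟩, rfl, Or.inl rfl⟩
  · obtain ⟨y, hxy⟩ := exists_covBy_of_wellFoundedLT hxmax
    exact ⟨⟨y, r x + 1, inColumn_rank_add_one_of_covBy hr hrh hxy⟩, rfl, Or.inr ⟨hxy, rfl⟩⟩

def IsColumnTop (a : Saturation r h) : Prop := ¬ InColumn r h a.elt (a.level + 1)

lemma card_isColumnTop (hr : StrictMono r) (hrh : ∀ x, r x < h) :
    Nat.card {a : Saturation r h // a.IsColumnTop} = Nat.card α := by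
  classical
  refine Nat.card_eq_of_bijective (fun a => a.1.elt) ⟨?_, fun x => ?_⟩
  · rintro ⟨a, ha⟩ ⟨b, hb⟩ (hab : a.elt = b.elt)
    rcases lt_trichotomy a.level b.level with hlt | heq | hlt
    · exact absurd (a.inColumn.of_le_of_le (hab ▸ b.inColumn) (Nat.le_succ _) hlt) ha
    · exact Subtype.ext (Saturation.ext hab heq)
    · exact absurd (b.inColumn.of_le_of_le (hab.symm ▸ a.inColumn) (Nat.le_succ _) hlt) hb
  · have htop := Nat.findGreatest_spec (hrh x).le (inColumn_rank hr hrh x)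
    exact ⟨⟨⟨x, _, htop⟩, fun hnext =>
      Nat.findGreatest_is_greatest (Nat.lt_succ_self _) hnext.1.le hnext⟩, rfl⟩

lemma card_covBy_eq (hr : StrictMono r) (hrh : ∀ x, r x < h) :
    Nat.card {p : Saturation r h × Saturation r h // p.1 ⋖ p.2} =
      Nat.card {a : Saturation r h // ¬ a.IsColumnTop} + Nat.card {p : α × α // p.1 ⋖ p.2} := by
  rw [← Nat.card_sum]
  symm
  let columnStep (a : {a : Saturation r h // ¬ a.IsColumnTop}) :
      {p : Saturation r h × Saturation r h // p.1 ⋖ p.2} :=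
    ⟨(a.1, ⟨a.1.elt, a.1.level + 1, not_not.mp a.2⟩), covBy_iff_step.mpr ⟨rfl, Or.inl rfl⟩⟩
  let crossStep (p : {p : α × α // p.1 ⋖ p.2}) :
      {p : Saturation r h × Saturation r h // p.1 ⋖ p.2} :=
    ⟨(embed hr hrh p.1.1, ⟨p.1.2, r p.1.1 + 1, inColumn_rank_add_one_of_covBy hr hrh p.2⟩),
      covBy_iff_step.mpr ⟨rfl, Or.inr ⟨p.2, rfl⟩⟩⟩
  refine Nat.card_eq_of_bijective (Sum.elim columnStep crossStep) ⟨?_, ?_⟩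
  · refine Function.Injective.sumElim (fun a b hab => ?_) (fun p q hpq => ?_) fun a p hap => ?_
    · exact Subtype.ext (congrArg (·.1.1) hab)
    · exact Subtype.ext (Prod.ext (congrArg (·.1.1.elt) hpq) (congrArg (·.1.2.elt) hpq))
    · exact p.2.ne ((congrArg (·.1.1.elt) hap).symm.trans (congrArg (·.1.2.elt) hap))
  · rintro ⟨⟨a, b⟩, hab⟩
    obtain ⟨hlevel, hcol | ⟨hcov, hrank⟩⟩ := covBy_iff_step.mp hab
    · have hb : ¬ a.IsColumnTop := not_not.mpr (hcol ▸ hlevel ▸ b.inColumn)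
      exact ⟨Sum.inl ⟨a, hb⟩, Subtype.ext (Prod.ext rfl (Saturation.ext hcol hlevel))⟩
    · refine ⟨Sum.inr ⟨(a.elt, b.elt), hcov⟩, Subtype.ext (Prod.ext
        (Saturation.ext rfl hrank.symm) (Saturation.ext rfl ?_))⟩
      dsimp only [Sum.elim_inr, crossStep] at hrank hlevel ⊢
      omega

lemma isTree_hasse (hr : StrictMono r) (hrh : ∀ x, r x < h)
    (hα : (SimpleGraph.hasse α).IsTree) : (SimpleGraph.hasse (Saturation r h)).IsTree := by
  rw [SimpleGraph.isTree_iff_connected_and_card, SimpleGraph.card_edgeSet_hasse] at hα ⊢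
  refine ⟨connected_hasse hr hrh hα.1, ?_⟩
  classical
  rw [card_covBy_eq hr hrh, ← Nat.card_congr (Equiv.sumCompl IsColumnTop), Nat.card_sum,
    card_isColumnTop hr hrh, ← hα.2]
  omega

lemma hasHeight (hr : StrictMono r) (hrh : ∀ x, r x < h) (hh : HasHeight α h) :
    HasHeight (Saturation r h) h := by
  classical
  obtain ⟨c, hc, hcard⟩ := hh.1
  refine ⟨⟨c.image (embed hr hrh), ?_, ?_⟩, fun d hd => hd.finsetCard_le fun a => a.inColumn.1⟩
  · rw [coe_image]
    exact embed_mono.isChain_image hc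
  · rw [card_image_of_injective _ embed_injective, hcard]

lemma card_eq_of_isMaxChainF [Nonempty α] (hr : StrictMono r) (hrh : ∀ x, r x < h)
    {c : Finset (Saturation r h)} (hc : IsMaxChainF c) : c.card = h :=
  have : Nonempty (Saturation r h) := ⟨embed hr hrh (Classical.arbitrary α)⟩
  hc.card_eq (fun a => a.inColumn.1) (fun _ => level_eq_zero_of_isMin hr hrh)
    fun _ => level_add_one_eq_of_isMax hr hrh

end Saturation

end Saturation

/-- Every finite poset whose Hasse diagram is a tree is an induced subposet
(`a ≤ b ↔ f a ≤ f b`) of a finite *saturated* poset (every maximal chain has `h` elements)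
of the same height whose Hasse diagram is also a tree. -/
theorem stmt_3 (α : Type) [Fintype α] [PartialOrder α] (h : ℕ)
    (hh : HasHeight α h) (htree : (SimpleGraph.hasse α).IsTree) :
    ∃ (β : Type) (instP : PartialOrder β) (_instF : Fintype β),
      @HasHeight β instP.toPreorder h ∧
      (∀ c : Finset β, @IsMaxChainF β instP.toPreorder c → c.card = h) ∧
      (@SimpleGraph.hasse β instP.toPreorder).IsTree ∧
      ∃ f : α → β, Function.Injective f ∧
        ∀ a b : α, a ≤ b ↔ instP.le (f a) (f b) := by
  obtain ⟨r, hr, hrh⟩ := exists_strictMono_lt_of_hasHeight hh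
  have : Nonempty α := htree.connected.nonempty
  exact ⟨Saturation r h, inferInstance, Fintype.ofFinite _, Saturation.hasHeight hr hrh hh,
    fun c hc => Saturation.card_eq_of_isMaxChainF hr hrh hc, Saturation.isTree_hasse hr hrh htree,
    Saturation.embed hr hrh, Saturation.embed_injective,
    fun a b => Saturation.embed_le_embed_iff.symm⟩
end

section
/- Let P be a finite saturated poset of height k ≥ 2 whose Hasse diagram is a tree, and suppose P is not a chain. Then there exists an element v of P that is a leaf of the Hasse diagram and an interval I of P with v ∈ I and |I| ≤ k-1 such that the Hasse diagram of P \ I is a tree and P \ I is a saturated poset of height k. -/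
/-- A poset is saturated of height `h` if it has height `h` and every maximal chain has
exactly `h` elements. -/
def SaturatedOfHeight (α : Type*) [Preorder α] (h : ℕ) : Prop :=
  HasHeight α h ∧ ∀ c : Finset α, IsMaxChainF c → c.card = h

/-!
Call an element branched if it has two upper covers or two lower covers. As the Hasse diagram is
connected and `P` is not a chain, branched elements exist; let `w` be one farthest, in the tree,
from a fixed branched element. Up to duality `w` has two upper covers `u ≠ u'`, and since the
diagram is a tree, one of them, say `u`, starts a branch avoiding `w` that contains no branched
element. Everything above `u` lies in that branch, so `[u, ∞) = [u, v]` is a chain attached to the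
rest of the tree only through the edge `w u`, and its top `v` is a leaf. Removing it leaves a tree,
and `|[u, v]| ≤ k - 1` because `w` extends it to a chain. A maximal chain of the remainder that is
not maximal in `P` would extend into `[u, v]`, hence lie below `w`, and could still be extended
by `u'`; so every maximal chain of the remainder is maximal in `P`, while a maximal chain through
`w` and `u'` survives the removal.
-/

open SimpleGraph Set OrderDual

section Saturation

variable {α β : Type*} [Preorder α] [Preorder β] {k : ℕ}

theorem isChain_map_orderEmbedding_iff (f : α ↪o β) {c : Finset α} :
    IsChain (· ≤ ·) (c.map f.toEmbedding : Set β) ↔ IsChain (· ≤ ·) (c : Set α) := by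
  rw [Finset.coe_map]
  exact IsChain.image_embedding_iff

theorem isChain_toDual_iff {s : Set α} :
    IsChain (α := αᵒᵈ) (· ≤ ·) s ↔ IsChain (· ≤ ·) s :=
  ⟨fun h _ ha _ hb hab => (h ha hb hab).symm, fun h _ ha _ hb hab => (h ha hb hab).symm⟩

theorem exists_isMaxChainF_superset [Finite α] {c : Finset α}
    (hc : IsChain (· ≤ ·) (c : Set α)) : ∃ d, c ⊆ d ∧ IsMaxChainF d := by
  obtain ⟨d, hcd, hd⟩ := Finite.exists_le_maximal
    (p := fun d : Finset α => IsChain (· ≤ ·) (d : Set α) ∧ c ⊆ d) ⟨hc, subset_rfl⟩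
  exact ⟨d, hcd, hd.1.1, fun e he hde => hde.antisymm (hd.2 ⟨he, hcd.trans hde⟩ hde)⟩

theorem HasHeight.isMaxChainF_of_card_eq (h : HasHeight α k) {c : Finset α}
    (hc : IsChain (· ≤ ·) (c : Set α)) (hck : c.card = k) : IsMaxChainF c :=
  ⟨hc, fun d hd hcd => Finset.eq_of_subset_of_card_le hcd (hck ▸ h.2 d hd)⟩

theorem HasHeight.ncard_le [Finite α] (h : HasHeight α k) {s : Set α}
    (hs : IsChain (· ≤ ·) s) : s.ncard ≤ k := by
  rw [ncard_eq_toFinset_card s s.toFinite]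
  exact h.2 _ (by simpa using hs)

theorem SaturatedOfHeight.of_orderEmbedding (f : α ↪o β) (h : SaturatedOfHeight β k)
    (hex : ∃ c : Finset α, IsMaxChainF (c.map f.toEmbedding))
    (hmax : ∀ c : Finset α, IsMaxChainF c → IsMaxChainF (c.map f.toEmbedding)) :
    SaturatedOfHeight α k := by
  obtain ⟨c, hc⟩ := hex
  refine ⟨⟨⟨c, (isChain_map_orderEmbedding_iff f).1 hc.1, ?_⟩, fun d hd => ?_⟩,
    fun d hd => ?_⟩
  · rw [← Finset.card_map f.toEmbedding, h.2 _ hc]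
  · rw [← Finset.card_map f.toEmbedding]
    exact h.1.2 _ ((isChain_map_orderEmbedding_iff f).2 hd)
  · rw [← Finset.card_map f.toEmbedding, h.2 _ (hmax d hd)]

theorem SaturatedOfHeight.of_orderIso (e : α ≃o β) (h : SaturatedOfHeight β k) :
    SaturatedOfHeight α k := by
  set f := e.toOrderEmbedding
  set g := e.symm.toOrderEmbedding
  have hfg : ∀ d : Finset β, (d.map g.toEmbedding).map f.toEmbedding = d := fun d => by
    ext; simp [f, g]
  refine h.of_orderEmbedding f ?_ fun c hc => ⟨(isChain_map_orderEmbedding_iff f).2 hc.1,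
    fun d hd hcd => ?_⟩
  · obtain ⟨d, hd, hdk⟩ := h.1.1
    exact ⟨_, (hfg d).symm ▸ h.1.isMaxChainF_of_card_eq hd hdk⟩
  · rw [← hfg d] at hd hcd ⊢
    rw [isChain_map_orderEmbedding_iff] at hd
    rw [hc.2 _ hd (Finset.map_subset_map.1 hcd)]

theorem SaturatedOfHeight.dual (h : SaturatedOfHeight α k) : SaturatedOfHeight αᵒᵈ k := by
  obtain ⟨⟨⟨c, hc, hck⟩, hle⟩, hmax⟩ := h
  exact ⟨⟨⟨c, isChain_toDual_iff.2 hc, hck⟩, fun d hd => hle d (isChain_toDual_iff.1 hd)⟩,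
    fun d hd => hmax d ⟨isChain_toDual_iff.1 hd.1, fun e he => hd.2 e (isChain_toDual_iff.2 he)⟩⟩

end Saturation

section Order

variable {α : Type*} [PartialOrder α]

def IsUnbranched (x : α) : Prop :=
  {y | x ⋖ y}.Subsingleton ∧ {y | y ⋖ x}.Subsingleton

theorem isUnbranched_toDual {x : α} : IsUnbranched (toDual x) ↔ IsUnbranched x := by
  simp only [IsUnbranched, Set.Subsingleton, OrderDual.forall, mem_ofPred_eq,
    toDual_covBy_toDual_iff, toDual_inj]
  exact and_comm

variable [Finite α]

theorem exists_hasse_walk_of_le {a b : α} (hab : a ≤ b) :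
    ∃ p : (hasse α).Walk a b, ∀ z ∈ p.support, z ∈ Icc a b := by
  induction a using WellFoundedGT.induction with
  | _ a ih =>
    rcases hab.lt_or_eq with hlt | rfl
    · obtain ⟨c, hac, hcb⟩ := exists_covBy_le_of_lt hlt
      obtain ⟨p, hp⟩ := ih c hac.lt hcb
      refine ⟨.cons (hasse_adj.2 (.inl hac)) p, ?_⟩
      simp only [Walk.support_cons, List.forall_mem_cons]
      exact ⟨⟨le_rfl, hab⟩, fun z hz => ⟨hac.le.trans (hp z hz).1, (hp z hz).2⟩⟩
    · exact ⟨.nil, by simp⟩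

theorem isChain_Ici_of_subsingleton {a : α} (h : ∀ x, a ≤ x → {y | x ⋖ y}.Subsingleton) :
    IsChain (· ≤ ·) (Ici a) := by
  induction a using WellFoundedGT.induction with
  | _ a ih =>
    intro x hx y hy hxy
    rcases (mem_Ici.1 hx).lt_or_eq with hax | rfl
    · rcases (mem_Ici.1 hy).lt_or_eq with hay | rfl
      · obtain ⟨c, hac, hcx⟩ := exists_covBy_le_of_lt hax
        obtain ⟨c', hac', hcy⟩ := exists_covBy_le_of_lt hay
        obtain rfl : c = c' := h a le_rfl hac hac'
        exact ih c hac.lt (fun z hz => h z (hac.le.trans hz)) hcx hcy hxy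
      · exact .inr hx
    · exact .inl hy

theorem hasse_degree_eq_one {v : α} [Fintype ((hasse α).neighborSet v)] (hmax : IsMax v)
    (hmin : ¬ IsMin v) (h : {y | y ⋖ v}.Subsingleton) : (hasse α).degree v = 1 := by
  rw [degree_eq_one_iff_existsUnique_adj]
  obtain ⟨y, hyv⟩ := not_isMin_iff.1 hmin
  obtain ⟨c, -, hcv⟩ := exists_le_covBy_of_lt hyv
  refine ⟨c, hasse_adj.2 (.inr hcv), fun z hz => ?_⟩
  rcases hasse_adj.1 hz with hvz | hzv
  · exact absurd hvz.lt hmax.not_lt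
  · exact h hzv hcv

theorem CovBy.le_of_le_of_not_le {w u : α} (hwu : w ⋖ u)
    (h : ∀ x, u ≤ x → {y | y ⋖ x}.Subsingleton) {x y : α} (hx : ¬ u ≤ x) (hy : u ≤ y)
    (hxy : x ≤ y) : x ≤ w := by
  induction y using WellFoundedLT.induction with
  | _ y ih =>
    obtain ⟨c, hxc, hcy⟩ := exists_le_covBy_of_lt (hxy.lt_of_ne fun h => hx (h ▸ hy))
    rcases hy.lt_or_eq with huy | rfl
    · obtain ⟨c', huc', hc'y⟩ := exists_le_covBy_of_lt huy
      obtain rfl : c = c' := h y hy hcy hc'y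
      exact ih c hcy.lt huc' hxc
    · exact h u le_rfl hcy hwu ▸ hxc

end Order

section OrderGraph

variable {α : Type*} [PartialOrder α]

theorem hasse_subtype_eq_induce {s : Set α} (hs : s.OrdConnected) :
    hasse s = (hasse α).induce s := by
  have hcov : ∀ a b : s, (a : α) ⋖ b ↔ a ⋖ b := fun a b =>
    Set.OrdConnected.apply_covBy_apply_iff (OrderEmbedding.subtype (· ∈ s)) (by simpa using hs)
  ext a b
  simp only [hasse_adj, induce_adj, hcov]

def OrderIso.hasseIso {β : Type*} [PartialOrder β] (e : α ≃o β) : hasse α ≃g hasse β :=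
  ⟨e.toEquiv, by simp [hasse_adj]⟩

end OrderGraph

namespace SimpleGraph

variable {V : Type*} {G : SimpleGraph V}

theorem Connected.induce_of_forall_adj_eq (hG : G.Connected) {s : Set V} {w : V} (hw : w ∈ s)
    (h : ∀ a ∈ s, ∀ b ∉ s, G.Adj a b → a = w) : (G.induce s).Connected := by
  have hsupp : ∀ {x} (p : G.Walk x w), p.IsPath → x ∈ s → ∀ z ∈ p.support, z ∈ s := by
    intro x p hp hx
    induction p with
    | nil => simpa using hx
    | @cons x y _ hxy q ih =>
      rw [Walk.cons_isPath_iff] at hp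
      have hy : y ∈ s := by
        by_contra hy
        exact hp.2 (h x hx y hy hxy ▸ q.end_mem_support)
      simp only [Walk.support_cons, List.forall_mem_cons]
      exact ⟨hx, ih hw h hp.1 hy⟩
  rw [connected_iff_exists_forall_reachable]
  refine ⟨⟨w, hw⟩, fun ⟨x, hx⟩ => ?_⟩
  obtain ⟨p, hp⟩ := hG.preconnected.exists_isPath x w
  exact (p.induce s (hsupp p hp hx)).reachable.symm

theorem IsAcyclic.mem_support_or_mem_support (hG : G.IsAcyclic) {w u₁ u₂ b : V}
    (h₁ : G.Adj w u₁) (h₂ : G.Adj w u₂) (hne : u₁ ≠ u₂) (p₁ : G.Walk u₁ b)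
    (p₂ : G.Walk u₂ b) : w ∈ p₁.support ∨ w ∈ p₂.support := by
  classical
  by_contra! hw
  obtain ⟨q, hq, hwq⟩ : ∃ q : G.Walk u₁ u₂, q.IsPath ∧ w ∉ q.support :=
    ⟨_, Walk.bypass_isPath (p₁.append p₂.reverse), fun hwq => by
      have := Walk.support_bypass_subset_support _ hwq
      simp only [Walk.mem_support_append_iff, Walk.support_reverse, List.mem_reverse] at this
      tauto⟩
  have hr : (Walk.cons h₁.symm (Walk.cons h₂ Walk.nil)).IsPath := by
    simp [h₂.ne, hne, h₁.ne.symm]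
  have := congrArg Subtype.val ((hG.subsingleton_path u₁ u₂).elim ⟨q, hq⟩ ⟨_, hr⟩)
  exact hwq (by simp [show q = _ from this])

theorem Connected.dist_lt_of_forall_mem_support (hG : G.Connected) {b w x : V} (hx : x ≠ w)
    (h : ∀ p : G.Walk b x, w ∈ p.support) : G.dist b w < G.dist b x := by
  classical
  obtain ⟨p, hp⟩ := (hG b x).exists_walk_length_eq_dist
  have hw := h p
  have hdrop : 0 < (p.dropUntil w hw).length :=
    Nat.pos_of_ne_zero fun h0 => hx (Walk.eq_of_length_eq_zero h0).symm
  calc G.dist b w ≤ (p.takeUntil w hw).length := dist_le _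
    _ < (p.takeUntil w hw).length + (p.dropUntil w hw).length := by omega
    _ = G.dist b x := by rw [← Walk.length_append, Walk.take_spec, hp]

theorem IsTree.exists_mem_forall_walk_mem_support [Finite V] (hG : G.IsTree) {B : Set V}
    (hB : B.Nonempty) : ∃ w ∈ B, ∀ ⦃u₁ u₂⦄, G.Adj w u₁ → G.Adj w u₂ → u₁ ≠ u₂ →
      ∃ u ∈ ({u₁, u₂} : Set V), ∀ x ∈ B, ∀ p : G.Walk u x, w ∈ p.support := by
  obtain ⟨b, hb⟩ := hB
  obtain ⟨w, hwB, hwmax⟩ := B.toFinite.exists_maximalFor (G.dist b) B ⟨b, hb⟩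
  refine ⟨w, hwB, fun u₁ u₂ h₁ h₂ hne => ?_⟩
  have hsep : ∀ u, (∀ q : G.Walk u b, w ∈ q.support) →
      ∀ x ∈ B, ∀ p : G.Walk u x, w ∈ p.support := by
    intro u hu x hx p
    by_contra hp
    have hxw : x ≠ w := by rintro rfl; exact hp p.end_mem_support
    have hlt := hG.connected.dist_lt_of_forall_mem_support hxw fun r => by
      by_contra hr
      have := hu (p.append r.reverse)
      simp only [Walk.mem_support_append_iff, Walk.support_reverse, List.mem_reverse] at this
      tauto
    exact hlt.not_ge (hwmax hx hlt.le)
  by_cases hu₁ : ∀ q : G.Walk u₁ b, w ∈ q.support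
  · exact ⟨u₁, by simp, hsep u₁ hu₁⟩
  · obtain ⟨q₁, hq₁⟩ := not_forall.1 hu₁
    exact ⟨u₂, by simp, hsep u₂ fun q₂ =>
      (hG.isAcyclic.mem_support_or_mem_support h₁ h₂ hne q₁ q₂).resolve_left hq₁⟩

end SimpleGraph

section Pruning

variable {α : Type*} [PartialOrder α]

theorem exists_not_isUnbranched [Finite α] (hconn : (hasse α).Connected)
    (hnc : ¬ IsChain (· ≤ ·) (univ : Set α)) : ∃ b : α, ¬ IsUnbranched b := by
  by_contra! h
  obtain ⟨m, -, hm⟩ := wellFounded_lt.has_min univ ⟨hconn.nonempty.some, trivial⟩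
  have hstep : ∀ x y, (hasse α).Adj x y → m ≤ x → m ≤ y := by
    rintro x y (hxy | hyx) hmx
    · exact hmx.trans hxy.le
    · obtain ⟨c, hmc, hcx⟩ :=
        exists_le_covBy_of_lt (hmx.lt_of_ne fun hmx' => hm y trivial (hmx' ▸ hyx.lt))
      exact (h x).2 hyx hcx ▸ hmc
  have hwalk : ∀ {x y} (p : (hasse α).Walk x y), m ≤ x → m ≤ y := by
    intro x y p
    induction p with
    | nil => exact id
    | cons hxy _ ih => exact fun hx => ih (hstep _ _ hxy hx)
  have hIci : Ici m = univ := eq_univ_of_forall fun x => hwalk (hconn m x).some le_rfl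
  exact hnc (hIci ▸ isChain_Ici_of_subsingleton fun x _ => (h x).1)

theorem exists_covBy_pair_unbranched [Finite α] (htree : (hasse α).IsTree)
    (hnc : ¬ IsChain (· ≤ ·) (univ : Set α)) :
    ∃ w u₁ u₂ : α, u₁ ≠ u₂ ∧ ((w ⋖ u₁ ∧ w ⋖ u₂ ∧ ∀ x, u₁ ≤ x → IsUnbranched x) ∨
      (u₁ ⋖ w ∧ u₂ ⋖ w ∧ ∀ x, x ≤ u₁ → IsUnbranched x)) := by
  obtain ⟨w, hwB, hw⟩ := htree.exists_mem_forall_walk_mem_support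
    (B := {x | ¬ IsUnbranched x}) (exists_not_isUnbranched htree.connected hnc)
  have hfree : ∀ u, (∀ x ∈ {x | ¬ IsUnbranched x}, ∀ p : (hasse α).Walk u x, w ∈ p.support) →
      ∀ x (p : (hasse α).Walk u x), w ∉ p.support → IsUnbranched x :=
    fun u hu x p hp => by_contra fun hx => hp (hu x hx p)
  rw [mem_ofPred_eq, IsUnbranched, not_and_or, not_subsingleton_iff, not_subsingleton_iff] at hwB
  rcases hwB with ⟨u₁, h₁, u₂, h₂, hne⟩ | ⟨u₁, h₁, u₂, h₂, hne⟩
  · obtain ⟨u, hu, hsep⟩ := hw (hasse_adj.2 (.inl h₁)) (hasse_adj.2 (.inl h₂)) hne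
    have hwu : w < u := by rcases hu with rfl | rfl; exacts [h₁.lt, h₂.lt]
    have hup : ∀ x, u ≤ x → IsUnbranched x := fun x hux => by
      obtain ⟨p, hp⟩ := exists_hasse_walk_of_le hux
      exact hfree u hsep x p fun hwp => hwu.not_ge (hp w hwp).1
    rcases hu with rfl | rfl
    · exact ⟨w, u, u₂, hne, .inl ⟨h₁, h₂, hup⟩⟩
    · exact ⟨w, u, u₁, hne.symm, .inl ⟨h₂, h₁, hup⟩⟩
  · obtain ⟨u, hu, hsep⟩ := hw (hasse_adj.2 (.inr h₁)) (hasse_adj.2 (.inr h₂)) hne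
    have huw : u < w := by rcases hu with rfl | rfl; exacts [h₁.lt, h₂.lt]
    have hdown : ∀ x, x ≤ u → IsUnbranched x := fun x hxu => by
      obtain ⟨p, hp⟩ := exists_hasse_walk_of_le hxu
      exact hfree u hsep x p.reverse fun hwp => huw.not_ge (hp w (by simpa using hwp)).2
    rcases hu with rfl | rfl
    · exact ⟨w, u, u₂, hne, .inr ⟨h₁, h₂, hdown⟩⟩
    · exact ⟨w, u, u₁, hne.symm, .inr ⟨h₂, h₁, hdown⟩⟩

theorem isTree_hasse_compl_Ici [Finite α] (htree : (hasse α).IsTree) {w u : α} (hwu : w ⋖ u)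
    (h : ∀ x, u ≤ x → {y | y ⋖ x}.Subsingleton) : (hasse ↥(Ici u)ᶜ).IsTree := by
  rw [hasse_subtype_eq_induce (isUpperSet_Ici (a := u)).compl.ordConnected]
  refine ⟨htree.connected.induce_of_forall_adj_eq (fun hw => hwu.lt.not_ge hw) ?_,
    htree.isAcyclic.induce _⟩
  intro a ha b hb hab
  have hb : u ≤ b := by simpa using hb
  rcases hasse_adj.1 hab with hab | hba
  · exact (hwu.le_of_le_of_not_le h ha hb hab.le).eq_of_not_lt fun haw =>
      hab.2 haw (hwu.lt.trans_le hb)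
  · exact absurd (hb.trans hba.le) ha

theorem saturatedOfHeight_compl_Ici [Finite α] {k : ℕ} (hsat : SaturatedOfHeight α k)
    {w u u' : α} (hwu : w ⋖ u) (hwu' : w ⋖ u') (hne : u ≠ u')
    (h : ∀ x, u ≤ x → {y | y ⋖ x}.Subsingleton) : SaturatedOfHeight ↥(Ici u)ᶜ k := by
  classical
  have hu' : u' ∈ (Ici u)ᶜ := fun huu' => hwu'.2 hwu.lt (lt_of_le_of_ne huu' hne)
  have hbelow : ∀ D : Finset α, IsChain (· ≤ ·) (D : Set α) → ∀ y ∈ D, u ≤ y →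
      ∀ x ∈ D, x ∈ (Ici u)ᶜ → x ≤ w := by
    intro D hD y hy huy x hx hux
    rcases hD.total hx hy with hxy | hyx
    · exact hwu.le_of_le_of_not_le h hux huy hxy
    · exact absurd (huy.trans hyx) hux
  refine hsat.of_orderEmbedding (OrderEmbedding.subtype _) ?_ fun C hC => ?_
  · obtain ⟨D, hD, hDmax⟩ := exists_isMaxChainF_superset (c := {w, u'})
      (by simpa using IsChain.pair hwu'.le)
    have hDs : ∀ x ∈ D, x ∈ (Ici u)ᶜ := fun x hx hux =>
      hwu'.lt.not_ge (hbelow D hDmax.1 x hx hux u' (hD (by simp)) hu')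
    exact ⟨D.subtype (· ∈ (Ici u)ᶜ), (Finset.subtype_map_of_mem hDs).symm ▸ hDmax⟩
  · refine ⟨(isChain_map_orderEmbedding_iff _).2 hC.1, fun D hD hCD => ?_⟩
    have hDs : ∀ x ∈ D, x ∈ (Ici u)ᶜ := by
      intro y hy huy
      have hCw : ∀ c ∈ C, (c : α) ≤ w := fun c hc =>
        hbelow D hD y hy huy c (hCD (Finset.mem_map_of_mem _ hc)) c.2
      have hins : IsChain (· ≤ ·) ((insert ⟨u', hu'⟩ C : Finset ↥(Ici u)ᶜ) : Set ↥(Ici u)ᶜ) := by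
        rw [Finset.coe_insert]
        exact hC.1.insert fun c hc _ => .inr ((hCw c hc).trans hwu'.le)
      have hu'C : ⟨u', hu'⟩ ∈ C :=
        hC.2 _ hins (Finset.subset_insert _ _) ▸ Finset.mem_insert_self _ C
      exact hwu'.lt.not_ge (hCw _ hu'C)
    obtain ⟨D, rfl⟩ : ∃ D' : Finset ↥(Ici u)ᶜ,
        D'.map (OrderEmbedding.subtype _).toEmbedding = D :=
      ⟨D.subtype _, Finset.subtype_map_of_mem hDs⟩
    rw [isChain_map_orderEmbedding_iff] at hD
    rw [hC.2 _ hD (Finset.map_subset_map.1 hCD)]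

end Pruning

open scoped Classical in
def HasRemovableLeafInterval (α : Type*) [Fintype α] [PartialOrder α] (k : ℕ) : Prop :=
  ∃ (v x y : α) (I : Set α), I = Icc x y ∧ v ∈ I ∧ (hasse α).degree v = 1 ∧
    I.ncard ≤ k - 1 ∧ (hasse ↥(Iᶜ)).IsTree ∧ SaturatedOfHeight ↥(Iᶜ) k

section Removal

variable {α : Type*} [Fintype α] [PartialOrder α] {k : ℕ}

theorem hasRemovableLeafInterval_of_covBy (hsat : SaturatedOfHeight α k)
    (htree : (hasse α).IsTree) {w u u' : α} (hwu : w ⋖ u) (hwu' : w ⋖ u') (hne : u ≠ u')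
    (hub : ∀ x, u ≤ x → IsUnbranched x) : HasRemovableLeafInterval α k := by
  classical
  have hchain := isChain_Ici_of_subsingleton fun x hx => (hub x hx).1
  obtain ⟨v, huv, hv⟩ := Finite.exists_le_maximal (p := (u ≤ ·)) le_rfl
  have hIcc : Icc u v = Ici u := Set.ext fun x =>
    ⟨And.left, fun hux => ⟨hux, (hchain.total hux huv).elim id (hv.2 hux)⟩⟩
  refine ⟨v, u, v, _, rfl, ⟨huv, le_rfl⟩,
    hasse_degree_eq_one (fun y hvy => hv.2 (huv.trans hvy) hvy)
      (not_isMin_of_lt (hwu.lt.trans_le huv)) (hub v huv).2, ?_, ?_, ?_⟩ <;> rw [hIcc]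
  · have := hsat.1.ncard_le (hchain.insert fun y hy _ => .inl (hwu.le.trans hy))
    rw [ncard_insert_of_notMem (show w ∉ Ici u from hwu.lt.not_ge)] at this
    omega
  · exact isTree_hasse_compl_Ici htree hwu fun x hx => (hub x hx).2
  · exact saturatedOfHeight_compl_Ici hsat hwu hwu' hne fun x hx => (hub x hx).2

theorem HasRemovableLeafInterval.of_dual (h : HasRemovableLeafInterval αᵒᵈ k) :
    HasRemovableLeafInterval α k := by
  classical
  obtain ⟨v, x, y, _, rfl, hv, hdeg, hcard, htree, hsat⟩ := h
  have hmem : ∀ a : α, a ∈ (Icc (ofDual y) (ofDual x))ᶜ ↔ toDual a ∈ (Icc x y)ᶜ :=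
    fun _ => not_congr and_comm
  let e : ↥(Icc (ofDual y) (ofDual x))ᶜ ≃o (↥(Icc x y)ᶜ)ᵒᵈ :=
    { toEquiv := (toDual.subtypeEquiv hmem).trans toDual, map_rel_iff' := Iff.rfl }
  refine ⟨ofDual v, ofDual y, ofDual x, _, rfl, ⟨hv.2, hv.1⟩, ?_, ?_,
    (Iso.isTree_iff (e.hasseIso.trans hasseDualIso)).2 htree, hsat.dual.of_orderIso e⟩
  · rw [← hasseDualIso_apply, hasseDualIso.degree_eq]
    exact hdeg
  · have hIcc : Icc x y = ofDual ⁻¹' Icc (ofDual y) (ofDual x) :=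
      Set.ext fun _ => and_comm
    rwa [hIcc, ncard_preimage_of_injective_subset_range ofDual.injective (by simp)] at hcard

end Removal

open scoped Classical in
theorem stmt_4_general (α : Type) [Fintype α] [PartialOrder α] (k : ℕ)
    (hsat : SaturatedOfHeight α k) (htree : (SimpleGraph.hasse α).IsTree)
    (hnotchain : ¬ IsChain (· ≤ ·) (Set.univ : Set α)) :
    ∃ (v x y : α) (I : Set α), I = Set.Icc x y ∧ v ∈ I ∧
      (SimpleGraph.hasse α).degree v = 1 ∧
      I.ncard ≤ k - 1 ∧
      (SimpleGraph.hasse ↥(Iᶜ)).IsTree ∧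
      SaturatedOfHeight ↥(Iᶜ) k := by
  obtain ⟨w, u, u', hne, ⟨hwu, hwu', hub⟩ | ⟨huw, hu'w, hub⟩⟩ :=
    exists_covBy_pair_unbranched htree hnotchain
  · exact hasRemovableLeafInterval_of_covBy hsat htree hwu hwu' hne hub
  · refine HasRemovableLeafInterval.of_dual (hasRemovableLeafInterval_of_covBy hsat.dual
      (hasseDualIso.isTree_iff.2 htree) (toDual_covBy_toDual_iff.2 huw)
      (toDual_covBy_toDual_iff.2 hu'w) (toDual.injective.ne hne) fun x hx => ?_)
    rw [← toDual_ofDual x, isUnbranched_toDual]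
    exact hub _ hx

open scoped Classical in
/-- If `P` is a finite saturated poset of height `k ≥ 2` whose Hasse diagram is a tree and
`P` is not a chain, then there is a leaf `v` of the Hasse diagram and an interval
`I = [x,y]` containing `v` with `|I| ≤ k-1` such that the Hasse diagram of `P \ I` is a
tree and `P \ I` is saturated of height `k`. -/
theorem stmt_4 (α : Type) [Fintype α] [PartialOrder α] (k : ℕ) (hk : 2 ≤ k)
    (hsat : SaturatedOfHeight α k) (htree : (SimpleGraph.hasse α).IsTree)
    (hnotchain : ¬ IsChain (· ≤ ·) (Set.univ : Set α)) :
    ∃ (v x y : α) (I : Set α), I = Set.Icc x y ∧ v ∈ I ∧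
      (SimpleGraph.hasse α).degree v = 1 ∧
      I.ncard ≤ k - 1 ∧
      (SimpleGraph.hasse ↥(Iᶜ)).IsTree ∧
      SaturatedOfHeight ↥(Iᶜ) k :=
  stmt_4_general α k hsat htree hnotchain
end

section
/- If F ⊆ 2^[n] satisfies |F| ≥ (1+ε)·C(n,⌊n/2⌋), then F contains at least (1/10)·n·ε·|F| pairs of sets F₁ ⊊ F₂. -/
/-!
Average over pairs `(σ, j)` of a maximal chain `σ` of `2^[n]` and a window `j ≤ n / 2`, the
window being the part of the chain between levels `j` and `n - j`, and weight window `j` by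
`C(n, j) - C(n, j - 1)`. These weights telescope, so every set lies in windows of total weight
`n!`, while all windows together weigh `n! · C` with `C = C(n, ⌊n/2⌋)`. Cauchy–Schwarz for the
number of members of `𝓕` in a window then gives `∑_{F ⊊ G} w(F, G) ≥ n! |𝓕| (|𝓕| - C) / (2C)`,
where `w(F, G)` is the weight of the windows containing both sets. Now `w(F, G)` equals
`n! / C(n - |F|, |G| - |F|)` or `n! / C(|G|, |F|)`, hence is at most `2 n! / (n + 1)` unless
`(F, G) = (∅, [n])`. If that exceptional pair occurs in `𝓕` and `|𝓕| ε` is small, the `2|𝓕| - 3`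
pairs through `∅` or `[n]` suffice.
-/

open Finset Equiv
open scoped Nat

theorem card_perm_comp_eq_of_card_fiber_eq {α K : Type*} [Fintype α] [DecidableEq α]
    [Fintype K] [DecidableEq K] (p q : α → K)
    (h : ∀ k, Fintype.card {x // p x = k} = Fintype.card {x // q x = k}) :
    Fintype.card {σ : Perm α // q ∘ σ = p} = ∏ k, (Fintype.card {x // p x = k})! := by
  let σ₀ : Perm α := Equiv.ofFiberEquiv fun k => Fintype.equivOfCardEq (h k)
  have hσ₀ : q ∘ σ₀ = p := funext (Equiv.ofFiberEquiv_map _)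
  rw [← DomMulAct.stabilizer_card p]
  refine Fintype.card_congr (Equiv.subtypeEquiv (Equiv.mulLeft σ₀⁻¹) fun σ => ?_)
  rw [← hσ₀]
  simp [Function.comp_assoc, ← Perm.coe_mul]

theorem Nat.self_le_choose {m r : ℕ} (h0 : 0 < r) (hr : r < m) : m ≤ m.choose r := by
  induction m generalizing r with
  | zero => omega
  | succ m ih =>
    obtain ⟨r, rfl⟩ := Nat.exists_eq_add_of_lt h0
    rw [zero_add, Nat.choose_succ_succ]
    rcases Nat.lt_or_ge (r + 1) m with h | h
    · have := ih (Nat.succ_pos r) h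
      have := Nat.choose_pos (show r ≤ m by omega)
      omega
    · obtain rfl : m = r + 1 := by omega
      simp

theorem sq_sum_sum_filter_le {Ω ι R : Type*} [CommSemiring R] [LinearOrder R]
    [IsStrictOrderedRing R] [ExistsAddOfLE R] (s : Finset Ω) {w : Ω → R}
    (hw : ∀ ω ∈ s, 0 ≤ w ω) (𝓕 : Finset ι) (A : ι → Ω → Prop) [∀ i, DecidablePred (A i)] :
    (∑ i ∈ 𝓕, ∑ ω ∈ s with A i ω, w ω) ^ 2 ≤
      (∑ ω ∈ s, w ω) * ∑ i ∈ 𝓕, ∑ j ∈ 𝓕, ∑ ω ∈ s with A i ω ∧ A j ω, w ω := by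
  let X (ω : Ω) : R := ∑ i ∈ 𝓕, if A i ω then 1 else 0
  have hfirst : ∑ i ∈ 𝓕, ∑ ω ∈ s with A i ω, w ω = ∑ ω ∈ s, w ω * X ω := by
    simp only [X, sum_filter, mul_sum, mul_ite, mul_one, mul_zero]
    exact sum_comm
  have hsecond :
      ∑ i ∈ 𝓕, ∑ j ∈ 𝓕, ∑ ω ∈ s with A i ω ∧ A j ω, w ω = ∑ ω ∈ s, w ω * X ω ^ 2 := by
    simp only [X, sq, sum_mul_sum]
    simp only [sum_filter, mul_sum, ite_and, mul_ite, mul_one, mul_zero]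
    exact (sum_congr rfl fun i _ => sum_comm).trans
      (sum_comm.trans (sum_congr rfl fun ω _ => sum_comm))
  rw [hfirst, hsecond]
  exact sum_sq_le_sum_mul_sum_of_sq_le_mul s hw (fun ω hω => mul_nonneg (hw ω hω) (sq_nonneg _))
    fun ω _ => (by ring : (w ω * X ω) ^ 2 = w ω * (w ω * X ω ^ 2)).le

theorem sum_sum_eq_sum_add_two_nsmul_sum_ssubset {β M : Type*} [DecidableEq β]
    [AddCommMonoid M] (𝓕 : Finset (Finset β)) (g : Finset β → Finset β → M)
    (hsymm : ∀ F G, g F G = g G F) (hzero : ∀ F G, ¬F ⊆ G → ¬G ⊆ F → g F G = 0) :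
    ∑ F ∈ 𝓕, ∑ G ∈ 𝓕, g F G =
      ∑ F ∈ 𝓕, g F F + 2 • ∑ p ∈ 𝓕 ×ˢ 𝓕 with p.1 ⊂ p.2, g p.1 p.2 := by
  have hsplit : ∀ F G, g F G = (if F = G then g F F else 0) +
      ((if F ⊂ G then g F G else 0) + (if G ⊂ F then g G F else 0)) := by
    intro F G
    by_cases hFG : F = G
    · subst hFG; simp
    by_cases hlt : F ⊂ G
    · simp [hFG, hlt, hlt.asymm]
    by_cases hgt : G ⊂ F
    · simp [hFG, hlt, hgt, hsymm F G]
    · rw [hzero F G (fun h => hlt (h.ssubset_of_ne hFG))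
        (fun h => hgt (h.ssubset_of_ne (Ne.symm hFG)))]
      simp [hFG, hlt, hgt]
  rw [sum_congr rfl fun F _ => sum_congr rfl fun G _ => hsplit F G]
  simp only [sum_add_distrib, sum_ite_eq, sum_filter, sum_product, sum_ite_mem, inter_self]
  rw [sum_comm (s := 𝓕) (t := 𝓕) (f := fun F G => if G ⊂ F then g G F else 0), two_nsmul]

section BlockIndex

variable {α : Type*} [DecidableEq α]

def blockIndex (F G : Finset α) (x : α) : Fin 3 := if x ∈ F then 0 else if x ∈ G then 1 else 2

lemma card_blockIndex_fiber [Fintype α] {F G : Finset α} (h : F ⊆ G) (i : Fin 3) :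
    Fintype.card {x // blockIndex F G x = i} = ![#F, #G - #F, Fintype.card α - #G] i := by
  rw [Fintype.card_subtype]
  fin_cases i <;> simp only [Fin.zero_eta, Fin.mk_one, Fin.reduceFinMk, Matrix.cons_val] <;>
    [skip; rw [← card_sdiff_of_subset h]; rw [← card_compl]] <;>
    congr 1 <;> ext x <;> rw [mem_filter] <;>
    by_cases hF : x ∈ F <;> by_cases hG : x ∈ G <;> simp [blockIndex, hF, hG]; exact hG (h hF)

lemma blockIndex_eq_blockIndex_iff {F G F' G' : Finset α} (h : F ⊆ G) (h' : F' ⊆ G') (x y : α) :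
    blockIndex F' G' y = blockIndex F G x ↔ (y ∈ F' ↔ x ∈ F) ∧ (y ∈ G' ↔ x ∈ G) := by
  have := @h x; have := @h' y
  unfold blockIndex
  split_ifs <;> simp_all

end BlockIndex

section Chain

variable {n : ℕ}

/-- `σ` lists `[n]` as `σ⁻¹ 0, σ⁻¹ 1, …`; its maximal chain consists of the initial segments
of this list. -/
def InChain (σ : Perm (Fin n)) (F : Finset (Fin n)) : Prop := ∀ x, x ∈ F ↔ (σ x : ℕ) < #F

instance (σ : Perm (Fin n)) (F : Finset (Fin n)) : Decidable (InChain σ F) := by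
  unfold InChain; infer_instance

lemma InChain.subset_or_subset {σ : Perm (Fin n)} {F G : Finset (Fin n)} (hF : InChain σ F)
    (hG : InChain σ G) : F ⊆ G ∨ G ⊆ F := by
  rcases le_total #F #G with h | h
  · exact .inl fun x hx => (hG x).2 (((hF x).1 hx).trans_le h)
  · exact .inr fun x hx => (hF x).2 (((hG x).1 hx).trans_le h)

lemma card_inChain_inChain {F G : Finset (Fin n)} (h : F ⊆ G) :
    #{σ : Perm (Fin n) | InChain σ F ∧ InChain σ G} = (#F)! * (#G - #F)! * (n - #G)! := by
  let S (k : ℕ) : Finset (Fin n) := {z | (z : ℕ) < k}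
  -- `σ` must carry the blocks `F`, `G \ F`, `Gᶜ` onto `S #F`, `S #G \ S #F`, `(S #G)ᶜ`.
  have hS : ∀ k ≤ n, #(S k) = k := fun k hk => by simp [S, Fin.card_filter_val_lt, hk]
  have hSS : S #F ⊆ S #G := fun z => by simpa [S] using fun hz => hz.trans_le (card_le_card h)
  have hchain : ∀ σ : Perm (Fin n),
      InChain σ F ∧ InChain σ G ↔ blockIndex (S #F) (S #G) ∘ σ = blockIndex F G := by
    intro σ
    simp only [InChain, funext_iff, Function.comp_apply, blockIndex_eq_blockIndex_iff h hSS, S,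
      mem_filter, mem_univ, true_and, forall_and, iff_comm]
  rw [filter_congr fun σ _ => hchain σ, ← Fintype.card_subtype,
    card_perm_comp_eq_of_card_fiber_eq _ _ fun i => by
      rw [card_blockIndex_fiber h, card_blockIndex_fiber hSS, hS _ (card_finset_fin_le F),
        hS _ (card_finset_fin_le G), Fintype.card_fin],
    Fin.prod_univ_three]
  simp [card_blockIndex_fiber h]

end Chain

section Weights

/-- `j - 1` truncates at `j = 0`, hence the separate case. -/
def windowWeight (n j : ℕ) : ℕ := if j = 0 then 1 else n.choose j - n.choose (j - 1)

lemma sum_range_windowWeight {n t : ℕ} (ht : t ≤ n / 2) :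
    ∑ j ∈ range (t + 1), windowWeight n j = n.choose t := by
  induction t with
  | zero => simp [windowWeight]
  | succ t ih =>
    have hmono : n.choose t ≤ n.choose (t + 1) := Nat.choose_le_succ_of_lt_half_left (by omega)
    rw [sum_range_succ, ih (by omega), windowWeight, if_neg t.succ_ne_zero, Nat.add_sub_cancel]
    omega

def pairWeight (n a b : ℕ) : ℕ := a ! * (b - a)! * (n - b)! * n.choose (min a (n - b))

lemma pairWeight_self {n a : ℕ} (ha : a ≤ n) : pairWeight n a a = n ! := by
  have : n.choose (min a (n - a)) = n.choose a := by
    rcases le_total a (n - a) with h | h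
    · rw [min_eq_left h]
    · rw [min_eq_right h, Nat.choose_symm ha]
  rw [pairWeight, this, Nat.sub_self, Nat.factorial_zero, mul_one, mul_comm,
    ← mul_assoc, Nat.choose_mul_factorial_mul_factorial ha]

lemma pairWeight_zero_self (n : ℕ) : pairWeight n 0 n = n ! := by simp [pairWeight]

lemma pairWeight_tsub_tsub {n a b : ℕ} (hab : a ≤ b) (hb : b ≤ n) :
    pairWeight n (n - b) (n - a) = pairWeight n a b := by
  rw [pairWeight, pairWeight, show n - a - (n - b) = b - a by omega, Nat.sub_sub_self (by omega),
    min_comm]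
  ring

lemma add_one_mul_pairWeight_le_of_le {n a b : ℕ} (hab : a < b) (hb : b < n)
    (ha : a ≤ n - b) : (n + 1) * pairWeight n a b ≤ 2 * n ! := by
  have hchoose : n + 1 ≤ 2 * (n - a).choose (b - a) := by
    have := Nat.self_le_choose (show 0 < b - a by omega) (show b - a < n - a by omega)
    omega
  have hfact : (n - a).choose (b - a) * pairWeight n a b = n ! := by
    rw [pairWeight, min_eq_left ha,
      ← Nat.choose_mul_factorial_mul_factorial (show a ≤ n by omega),
      ← Nat.choose_mul_factorial_mul_factorial (show b - a ≤ n - a by omega),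
      show n - a - (b - a) = n - b by omega]
    ring
  calc (n + 1) * pairWeight n a b ≤ 2 * (n - a).choose (b - a) * pairWeight n a b := by gcongr
    _ = 2 * n ! := by rw [mul_assoc, hfact]

lemma add_one_mul_pairWeight_le {n a b : ℕ} (hab : a < b) (hb : b ≤ n)
    (hne : ¬(a = 0 ∧ b = n)) : (n + 1) * pairWeight n a b ≤ 2 * n ! := by
  rcases le_total a (n - b) with h | h
  · exact add_one_mul_pairWeight_le_of_le hab (by omega) h
  · rw [← pairWeight_tsub_tsub hab.le hb]
    exact add_one_mul_pairWeight_le_of_le (by omega) (by omega) (by omega)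

end Weights

section Window

variable {n : ℕ}

def windows (n : ℕ) : Finset (Perm (Fin n) × ℕ) := univ ×ˢ range (n / 2 + 1)

def InWindow (F : Finset (Fin n)) (ω : Perm (Fin n) × ℕ) : Prop :=
  InChain ω.1 F ∧ ω.2 ≤ min #F (n - #F)

instance (F : Finset (Fin n)) : DecidablePred (InWindow F) := fun _ => by
  unfold InWindow; infer_instance

lemma sum_windows : ∑ ω ∈ windows n, windowWeight n ω.2 = n ! * n.choose (n / 2) := by
  simp only [windows, sum_product, sum_range_windowWeight le_rfl, sum_const, card_univ,
    Fintype.card_perm, Fintype.card_fin, smul_eq_mul]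

lemma sum_windows_inWindow_and {F G : Finset (Fin n)} (h : F ⊆ G) :
    ∑ ω ∈ windows n with InWindow F ω ∧ InWindow G ω, windowWeight n ω.2 =
      pairWeight n #F #G := by
  have hG := card_finset_fin_le G
  have hFG : #F ≤ #G := card_le_card h
  have hfilter : {ω ∈ windows n | InWindow F ω ∧ InWindow G ω} =
      (univ.filter fun σ => InChain σ F ∧ InChain σ G) ×ˢ range (min #F (n - #G) + 1) := by
    ext ω
    rw [mem_filter]
    simp only [windows, InWindow, mem_product, mem_filter, mem_univ, true_and, mem_range]
    constructor
    · rintro ⟨hj, ⟨hF, hjF⟩, hG, hjG⟩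
      exact ⟨⟨hF, hG⟩, by omega⟩
    · rintro ⟨⟨hF, hG⟩, hj⟩
      exact ⟨by omega, ⟨hF, by omega⟩, hG, by omega⟩
  simp only [hfilter, sum_product, sum_range_windowWeight (show min #F (n - #G) ≤ n / 2 by omega),
    sum_const, card_inChain_inChain h, smul_eq_mul, pairWeight]

lemma sum_windows_inWindow (F : Finset (Fin n)) :
    ∑ ω ∈ windows n with InWindow F ω, windowWeight n ω.2 = n ! := by
  simpa [pairWeight_self (card_finset_fin_le F)] using sum_windows_inWindow_and (subset_refl F)

lemma sum_windows_inWindow_and_eq_zero {F G : Finset (Fin n)} (hFG : ¬F ⊆ G) (hGF : ¬G ⊆ F) :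
    ∑ ω ∈ windows n with InWindow F ω ∧ InWindow G ω, windowWeight n ω.2 = 0 :=
  sum_eq_zero fun ω hω => by
    obtain ⟨-, ⟨hF, -⟩, hG, -⟩ := mem_filter.1 hω
    exact ((hF.subset_or_subset hG).elim hFG hGF).elim

end Window

section Counting

variable {n : ℕ}

lemma card_mul_factorial_sq_le (𝓕 : Finset (Finset (Fin n))) :
    (#𝓕 * n !) ^ 2 ≤ n ! * n.choose (n / 2) *
      (#𝓕 * n ! + 2 * ∑ p ∈ 𝓕 ×ˢ 𝓕 with p.1 ⊂ p.2, pairWeight n #p.1 #p.2) := by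
  have hCS := sq_sum_sum_filter_le (windows n) (w := fun ω => windowWeight n ω.2)
    (fun _ _ => Nat.zero_le _) 𝓕 InWindow
  rw [sum_windows, sum_sum_eq_sum_add_two_nsmul_sum_ssubset 𝓕 _
    (fun F G => by simp only [and_comm]) fun F G => sum_windows_inWindow_and_eq_zero] at hCS
  have hpairs : ∑ p ∈ 𝓕 ×ˢ 𝓕 with p.1 ⊂ p.2,
      ∑ ω ∈ windows n with InWindow p.1 ω ∧ InWindow p.2 ω, windowWeight n ω.2 =
      ∑ p ∈ 𝓕 ×ˢ 𝓕 with p.1 ⊂ p.2, pairWeight n #p.1 #p.2 :=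
    sum_congr rfl fun p hp => sum_windows_inWindow_and (mem_filter.1 hp).2.subset
  simpa [sum_windows_inWindow, hpairs, mul_comm] using hCS

lemma add_one_mul_sum_pairWeight_le (𝓕 : Finset (Finset (Fin n))) :
    (n + 1) * ∑ p ∈ 𝓕 ×ˢ 𝓕 with p.1 ⊂ p.2, pairWeight n #p.1 #p.2 ≤
      n ! * (2 * #{p ∈ 𝓕 ×ˢ 𝓕 | p.1 ⊂ p.2} +
        if (∅, univ) ∈ {p ∈ 𝓕 ×ˢ 𝓕 | p.1 ⊂ p.2} then n + 1 else 0) := by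
  have hpair : ∀ p ∈ {p ∈ 𝓕 ×ˢ 𝓕 | p.1 ⊂ p.2}, (n + 1) * pairWeight n #p.1 #p.2 ≤
      n ! * (2 + if p = (∅, univ) then n + 1 else 0) := by
    intro p hp
    by_cases hbad : p = (∅, univ)
    · subst hbad
      simp only [card_empty, card_univ, Fintype.card_fin, pairWeight_zero_self, if_true]
      nlinarith
    · have hlt := card_lt_card (mem_filter.1 hp).2
      rw [if_neg hbad, add_zero, mul_comm (n !)]
      refine add_one_mul_pairWeight_le hlt (card_finset_fin_le _) fun ⟨h0, hn⟩ =>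
        hbad (Prod.ext ?_ ?_)
      · exact card_eq_zero.1 h0
      · exact eq_univ_of_card _ (hn.trans (Fintype.card_fin n).symm)
  calc (n + 1) * ∑ p ∈ 𝓕 ×ˢ 𝓕 with p.1 ⊂ p.2, pairWeight n #p.1 #p.2
      ≤ ∑ p ∈ 𝓕 ×ˢ 𝓕 with p.1 ⊂ p.2, n ! * (2 + if p = (∅, univ) then n + 1 else 0) := by
        rw [mul_sum]; exact sum_le_sum hpair
    _ = _ := by rw [← mul_sum, sum_add_distrib, sum_const, sum_ite_eq', smul_eq_mul, mul_comm 2]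

lemma add_one_mul_card_sq_le (𝓕 : Finset (Finset (Fin n))) :
    (n + 1) * #𝓕 ^ 2 ≤ n.choose (n / 2) * ((n + 1) * #𝓕 +
      2 * (2 * #{p ∈ 𝓕 ×ˢ 𝓕 | p.1 ⊂ p.2} +
        if (∅, univ) ∈ {p ∈ 𝓕 ×ˢ 𝓕 | p.1 ⊂ p.2} then n + 1 else 0)) := by
  set T := ∑ p ∈ 𝓕 ×ˢ 𝓕 with p.1 ⊂ p.2, pairWeight n #p.1 #p.2
  set B := 2 * #{p ∈ 𝓕 ×ˢ 𝓕 | p.1 ⊂ p.2} +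
    if (∅, univ) ∈ {p ∈ 𝓕 ×ˢ 𝓕 | p.1 ⊂ p.2} then n + 1 else 0
  have hT : (n + 1) * T ≤ n ! * B := add_one_mul_sum_pairWeight_le 𝓕
  refine Nat.le_of_mul_le_mul_left ?_ (pow_pos (Nat.factorial_pos n) 2)
  calc n ! ^ 2 * ((n + 1) * #𝓕 ^ 2) = (n + 1) * (#𝓕 * n !) ^ 2 := by ring
    _ ≤ (n + 1) * (n ! * n.choose (n / 2) * (#𝓕 * n ! + 2 * T)) :=
      Nat.mul_le_mul_left _ (card_mul_factorial_sq_le 𝓕)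
    _ = n ! * n.choose (n / 2) * ((n + 1) * #𝓕 * n ! + 2 * ((n + 1) * T)) := by ring
    _ ≤ n ! * n.choose (n / 2) * ((n + 1) * #𝓕 * n ! + 2 * (n ! * B)) := by gcongr
    _ = n ! ^ 2 * (n.choose (n / 2) * ((n + 1) * #𝓕 + 2 * B)) := by ring

lemma two_mul_card_le_card_ssubset_pairs_add_three {α : Type*} [Fintype α] [DecidableEq α]
    {𝓕 : Finset (Finset α)} (h : (∅, univ) ∈ {p ∈ 𝓕 ×ˢ 𝓕 | p.1 ⊂ p.2}) :
    2 * #𝓕 ≤ #{p ∈ 𝓕 ×ˢ 𝓕 | p.1 ⊂ p.2} + 3 := by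
  obtain ⟨hmem, hne : (∅ : Finset α) ⊂ univ⟩ := mem_filter.1 h
  obtain ⟨hempty : ∅ ∈ 𝓕, huniv : univ ∈ 𝓕⟩ := mem_product.1 hmem
  set 𝓖 := 𝓕.erase ∅
  have hdisj : Disjoint (𝓖.map (.sectR ∅ _)) ((𝓖.erase univ).map (.sectL _ univ)) := by
    rw [disjoint_left]
    rintro _ hA hB
    obtain ⟨F, -, rfl⟩ := mem_map.1 hA
    obtain ⟨G, hG, hGF⟩ := mem_map.1 hB
    exact (mem_erase.1 (mem_erase.1 hG).2).1 (congrArg Prod.fst hGF)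
  have hsub : (𝓖.map (.sectR ∅ _)).disjUnion ((𝓖.erase univ).map (.sectL _ univ)) hdisj ⊆
      {p ∈ 𝓕 ×ˢ 𝓕 | p.1 ⊂ p.2} := by
    intro p hp
    rcases mem_disjUnion.1 hp with hA | hB
    · obtain ⟨F, hF, rfl⟩ := mem_map.1 hA
      obtain ⟨hF0, hF⟩ := mem_erase.1 hF
      exact mem_filter.2
        ⟨mem_product.2 ⟨hempty, hF⟩, empty_ssubset.2 (nonempty_iff_ne_empty.2 hF0)⟩
    · obtain ⟨F, hF, rfl⟩ := mem_map.1 hB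
      obtain ⟨hFu, hF⟩ := mem_erase.1 hF
      exact mem_filter.2 ⟨mem_product.2 ⟨mem_of_mem_erase hF, huniv⟩, ssubset_univ_iff.2 hFu⟩
  have := card_le_card hsub
  rw [card_disjUnion, card_map, card_map, card_erase_of_mem (mem_erase.2 ⟨hne.ne.symm, huniv⟩),
    card_erase_of_mem hempty] at this
  omega

end Counting

lemma add_one_mul_mul_le_of_sq_le {n m C ε Q : ℝ} (hn : 0 ≤ n) (hm0 : 0 ≤ m) (hC : 0 < C)
    (hm : (1 + ε) * C ≤ m) (h : (n + 1) * m ^ 2 ≤ C * ((n + 1) * m + Q)) :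
    (n + 1) * m * ε ≤ Q := by
  refine le_of_mul_le_mul_left ?_ hC
  nlinarith [mul_le_mul_of_nonneg_left (show ε * C ≤ m - C by linarith)
    (by positivity : 0 ≤ (n + 1) * m)]

/-- If `𝓕 ⊆ 2^[n]` has `|𝓕| ≥ (1+ε)·C(n,⌊n/2⌋)`, then there are at least
`(1/10)·n·ε·|𝓕|` pairs of sets `F₁ ⊊ F₂` in `𝓕` (each unordered pair `{F₁, F₂}` with
`F₁ ⊊ F₂` corresponds to exactly one ordered pair `(F₁, F₂)` with `F₁ ⊊ F₂`). -/
theorem stmt_7 (n : ℕ) (ε : ℝ) (hε : 0 < ε) (𝓕 : Finset (Finset (Fin n)))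
    (hcard : (1 + ε) * (n.choose (n / 2) : ℝ) ≤ (𝓕.card : ℝ)) :
    (1 / 10 : ℝ) * n * ε * (𝓕.card : ℝ) ≤
      (((𝓕 ×ˢ 𝓕).filter (fun p => p.1 ⊂ p.2)).card : ℝ) := by
  have hkey := add_one_mul_card_sq_le 𝓕
  set P := #{p ∈ 𝓕 ×ˢ 𝓕 | p.1 ⊂ p.2}
  set C := n.choose (n / 2)
  have hnC : (n : ℝ) ≤ C := by
    exact_mod_cast (Nat.choose_one_right n).symm.trans_le (Nat.choose_le_middle 1 n)
  have hC : (0 : ℝ) < C := by exact_mod_cast Nat.choose_pos (Nat.div_le_self n 2)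
  by_cases hbad : (∅, univ) ∈ {p ∈ 𝓕 ×ˢ 𝓕 | p.1 ⊂ p.2}
  · rw [if_pos hbad] at hkey
    have hmain := add_one_mul_mul_le_of_sq_le n.cast_nonneg (#𝓕).cast_nonneg hC hcard
      (Q := 2 * (2 * P + (n + 1))) (by exact_mod_cast hkey)
    have h2m : 2 * (#𝓕 : ℝ) ≤ P + 3 := by
      exact_mod_cast two_mul_card_le_card_ssubset_pairs_add_three hbad
    have hn : (1 : ℝ) ≤ n := by
      exact_mod_cast Fin.pos_iff_nonempty.2
        (univ_nonempty_iff.1 (empty_ssubset.1 (mem_filter.1 hbad).2))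
    have hm : (n : ℝ) + 1 ≤ #𝓕 := by
      have : (n : ℝ) < #𝓕 := by nlinarith
      exact_mod_cast (show n < #𝓕 by exact_mod_cast this)
    rcases le_or_gt 4 (#𝓕 * ε) with hlarge | hsmall <;> nlinarith
  · rw [if_neg hbad] at hkey
    have hmain := add_one_mul_mul_le_of_sq_le n.cast_nonneg (#𝓕).cast_nonneg hC hcard
      (Q := 2 * (2 * P + 0)) (by exact_mod_cast hkey)
    nlinarith
end

section
/- If a poset P has a Hasse diagram that is a tree and height 2, then there is a constant c(P) such that any family F ⊆ 2^[n] with |F| ≥ (1 + c(P)/n)·C(n,⌊n/2⌋) contains P as a (not necessarily induced) subposet. -/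
/-!
Sets of size at most `n / 4` number `O(C(n, n/2) / n)`, so they can be discarded. For the
remaining family `W`, move a symmetric chain decomposition of `2^[n]` by a random permutation:
each chain meets `W` in at most one set more than it contains comparable pairs of `W`, and a pair
`A ⊂ B` falls into a common chain with probability at most `1 / C(|B|, |A|) ≤ 4 / n`. Hence
`n |W| ≤ n C(n, n/2) + 4 #{A ⊂ B in W}`, and for large `c` the comparable pairs outnumber
`2 |P| |W|`. Repeatedly deleting a set lying below fewer than `|P|` sets, or above fewer than
`|P|` sets, of the other side keeps this excess and ends with non-empty `M₀, M₁ ⊆ W` in which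
every set of `M₀` lies below `|P|` sets of `M₁` and every set of `M₁` above `|P|` sets of `M₀`.
As `P` has height `2`, its Hasse tree is properly 2-coloured by minimal and non-minimal elements,
and it embeds greedily, leaf by leaf, minimal elements into `M₀` and the others into `M₁`.
-/

open Finset Function
open scoped Pointwise Nat

/-! ### Binomial estimates -/

namespace Nat

theorem two_mul_choose_le_choose_succ {n j : ℕ} (h : 3 * (j + 1) ≤ n) :
    2 * n.choose j ≤ n.choose (j + 1) := by
  refine Nat.le_of_mul_le_mul_right ?_ j.succ_pos
  calc 2 * n.choose j * (j + 1) = n.choose j * (2 * (j + 1)) := by ring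
    _ ≤ n.choose j * (n - j) := Nat.mul_le_mul_left _ (by omega)
    _ = n.choose (j + 1) * (j + 1) := (choose_succ_right_eq n j).symm

theorem two_pow_mul_choose_le_choose_add {n j : ℕ} :
    ∀ {d : ℕ}, 3 * (j + d) ≤ n → 2 ^ d * n.choose j ≤ n.choose (j + d)
  | 0, _ => by simp
  | d + 1, h => calc
      2 ^ (d + 1) * n.choose j = 2 * (2 ^ d * n.choose j) := by ring
      _ ≤ 2 * n.choose (j + d) :=
        Nat.mul_le_mul_left _ (two_pow_mul_choose_le_choose_add (by omega))
      _ ≤ n.choose (j + (d + 1)) := two_mul_choose_le_choose_succ (by omega)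

theorem sum_range_choose_le_two_mul_choose {n m : ℕ} (h : 3 * m ≤ n) :
    ∑ j ∈ range (m + 1), n.choose j ≤ 2 * n.choose m := by
  induction m with
  | zero => simp
  | succ m ih =>
    rw [sum_range_succ]
    have := two_mul_choose_le_choose_succ (n := n) (j := m) (by omega)
    have := ih (by omega)
    omega

theorem le_choose_of_pos_of_lt {a b : ℕ} (ha : 0 < a) (hab : a < b) : b ≤ b.choose a := by
  induction b with
  | zero => omega
  | succ b ih =>
    obtain ⟨a, rfl⟩ : ∃ a', a = a' + 1 := ⟨a - 1, by omega⟩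
    rcases (Nat.lt_succ_iff.1 hab).eq_or_lt with h | h
    · rw [h, choose_succ_self_right]
    · rw [choose_succ_succ']
      have := ih h
      have := choose_pos (n := b) (k := a) (by omega)
      omega

end Nat

theorem card_mul_card_filter_card_le_div_four_le (γ : Type*) [Fintype γ] [DecidableEq γ] :
    Fintype.card γ * #{A : Finset γ | #A ≤ Fintype.card γ / 4} ≤
      32 * (Fintype.card γ).choose (Fintype.card γ / 2) := by
  set n := Fintype.card γ
  -- `C(n, j)` at least doubles with each step of `j` from `n / 4` up to `n / 3`
  set d := n / 3 - n / 4
  have hsum : #{A : Finset γ | #A ≤ n / 4} ≤ ∑ j ∈ range (n / 4 + 1), n.choose j := calc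
    _ ≤ #((range (n / 4 + 1)).biUnion fun j => powersetCard j (univ : Finset γ)) :=
      card_le_card fun A hA => by simpa [Nat.lt_succ_iff] using hA
    _ ≤ _ := card_biUnion_le.trans (by simp [n])
  have hgeom : 2 ^ d * ∑ j ∈ range (n / 4 + 1), n.choose j ≤ 2 * n.choose (n / 2) := calc
    _ ≤ 2 ^ d * (2 * n.choose (n / 4)) :=
      Nat.mul_le_mul_left _ (Nat.sum_range_choose_le_two_mul_choose (by omega))
    _ = 2 * (2 ^ d * n.choose (n / 4)) := by ring
    _ ≤ 2 * n.choose (n / 4 + d) :=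
      Nat.mul_le_mul_left _ (Nat.two_pow_mul_choose_le_choose_add (by omega))
    _ ≤ 2 * n.choose (n / 2) := Nat.mul_le_mul_left _ (Nat.choose_le_middle _ _)
  have hn : 2 * n ≤ 32 * 2 ^ d := calc
    2 * n ≤ 24 * (n / 12 + 1) := by omega
    _ ≤ 24 * 2 ^ (n / 12) := Nat.mul_le_mul_left _ Nat.lt_two_pow_self
    _ ≤ 32 * 2 ^ d := Nat.mul_le_mul (by norm_num) (Nat.pow_le_pow_right (by norm_num) (by omega))
  refine Nat.le_of_mul_le_mul_left ?_ (pow_pos two_pos d)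
  calc 2 ^ d * (n * #{A : Finset γ | #A ≤ n / 4})
      ≤ n * (2 ^ d * ∑ j ∈ range (n / 4 + 1), n.choose j) := by
        rw [mul_left_comm]; exact Nat.mul_le_mul_left _ (Nat.mul_le_mul_left _ hsum)
    _ ≤ n * (2 * n.choose (n / 2)) := Nat.mul_le_mul_left _ hgeom
    _ = 2 * n * n.choose (n / 2) := by ring
    _ ≤ 32 * 2 ^ d * n.choose (n / 2) := Nat.mul_le_mul_right _ hn
    _ = 2 ^ d * (32 * n.choose (n / 2)) := by ring

/-! ### Symmetric chain decompositions -/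

section SymmetricChainDecomposition

variable {γ : Type*}

theorem IsChain.eq_of_card_eq {c : Set (Finset γ)} (hc : IsChain (· ⊆ ·) c) {A B : Finset γ}
    (hA : A ∈ c) (hB : B ∈ c) (h : #A = #B) : A = B := by
  rcases hc.total hA hB with hAB | hBA
  · exact eq_of_subset_of_card_le hAB h.ge
  · exact (eq_of_subset_of_card_le hBA h.le).symm

theorem IsChain.sup_id_mem {α : Type*} [SemilatticeSup α] [OrderBot α] {c : Finset α}
    (hc : IsChain (· ≤ ·) (c : Set α)) (hne : c.Nonempty) : c.sup id ∈ c := by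
  rw [← sup'_eq_sup hne]
  refine sup'_mem _ (fun A hA B hB => ?_) _ hne id fun _ h => h
  rcases hc.total hA hB with h | h
  · rwa [sup_of_le_right h]
  · rwa [sup_of_le_left h]

/-- `image_card` says that `c` is a chain `A_l ⊂ A_{l+1} ⊂ ⋯ ⊂ A_{|s|-l}` with `|A_i| = i`. -/
structure IsSymmetricChainDecomposition (s : Finset γ) (P : Finset (Finset (Finset γ))) :
    Prop where
  isChain : ∀ c ∈ P, IsChain (· ⊆ ·) (c : Set (Finset γ))
  image_card : ∀ c ∈ P, ∃ l, 2 * l ≤ #s ∧ c.image card = Icc l (#s - l)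
  subset : ∀ c ∈ P, ∀ A ∈ c, A ⊆ s
  exists_mem : ∀ A ⊆ s, ∃ c ∈ P, A ∈ c
  eq_of_mem : ∀ c ∈ P, ∀ c' ∈ P, ∀ A ∈ c, A ∈ c' → c = c'

namespace IsSymmetricChainDecomposition

variable {s : Finset γ} {P : Finset (Finset (Finset γ))} {c : Finset (Finset γ)} {x : γ}

theorem notMem_of_mem (hP : IsSymmetricChainDecomposition s P) (hx : x ∉ s) (hc : c ∈ P)
    {A : Finset γ} (hA : A ∈ c) : x ∉ A :=
  fun h => hx (hP.subset c hc A hA h)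

theorem card_le_choose (hP : IsSymmetricChainDecomposition s P) :
    #P ≤ (#s).choose (#s / 2) := by
  rw [← card_powersetCard]
  refine card_le_card_of_forall_subsingleton (fun c A => A ∈ c) (fun c hc => ?_)
    fun A _ c₁ hc₁ c₂ hc₂ => hP.eq_of_mem c₁ hc₁.1 c₂ hc₂.1 A hc₁.2 hc₂.2
  obtain ⟨l, hls, hl⟩ := hP.image_card c hc
  obtain ⟨A, hA, hAc⟩ := mem_image.1 (hl ▸ mem_Icc.2 ⟨by omega, by omega⟩ : #s / 2 ∈ c.image card)
  exact ⟨A, mem_powersetCard.2 ⟨hP.subset c hc A hA, hAc⟩, hA⟩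

end IsSymmetricChainDecomposition

variable [DecidableEq γ]

/-- De Bruijn's doubling step: a chain `A_l ⊂ ⋯ ⊂ A_{n-l}` of subsets of `s` gives the chains
`A_l ⊂ ⋯ ⊂ A_{n-l} ⊂ A_{n-l} ∪ {x}` and `A_l ∪ {x} ⊂ ⋯ ⊂ A_{n-l-1} ∪ {x}` of subsets of
`insert x s`; the second one is empty when `l = n - l`. -/
def chainStep (x : γ) (P : Finset (Finset (Finset γ))) : Finset (Finset (Finset γ)) :=
  (P.image (fun c => insert (insert x (c.sup id)) c) ∪
    P.image (fun c => (c.erase (c.sup id)).image (insert x))).erase ∅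

theorem mem_chainStep {x : γ} {P : Finset (Finset (Finset γ))} {C : Finset (Finset γ)} :
    C ∈ chainStep x P ↔ C.Nonempty ∧ ∃ c ∈ P,
      C = insert (insert x (c.sup id)) c ∨ C = (c.erase (c.sup id)).image (insert x) := by
  simp only [chainStep, mem_erase, mem_union, mem_image, nonempty_iff_ne_empty]
  grind

namespace IsSymmetricChainDecomposition

variable {s : Finset γ} {P : Finset (Finset (Finset γ))} {c : Finset (Finset γ)} {x : γ}

theorem sup_mem (hP : IsSymmetricChainDecomposition s P) (hc : c ∈ P) : c.sup id ∈ c := by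
  refine (hP.isChain c hc).sup_id_mem ?_
  obtain ⟨l, hl, hcl⟩ := hP.image_card c hc
  have : (c.image card).Nonempty := hcl ▸ nonempty_Icc.2 (by omega)
  exact image_nonempty.1 this

theorem card_sup (hP : IsSymmetricChainDecomposition s P) (hc : c ∈ P) {l : ℕ}
    (hl : c.image card = Icc l (#s - l)) : #(c.sup id) = #s - l := by
  have hmem : ∀ i, i ∈ Icc l (#s - l) ↔ ∃ A ∈ c, #A = i := by simp [← hl]
  have hsup := mem_Icc.1 ((hmem _).2 ⟨_, hP.sup_mem hc, rfl⟩)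
  obtain ⟨A, hA, hAl⟩ := (hmem (#s - l)).1 (mem_Icc.2 ⟨by omega, le_rfl⟩)
  have := card_le_card (le_sup (f := id) hA)
  simp only [id] at this
  omega

theorem erase_mem_of_mem (hP : IsSymmetricChainDecomposition s P) (hx : x ∉ s) (hc : c ∈ P)
    {C : Finset (Finset γ)}
    (hC : C = insert (insert x (c.sup id)) c ∨ C = (c.erase (c.sup id)).image (insert x))
    {A : Finset γ} (hA : A ∈ C) : A.erase x ∈ c := by
  rcases hC with rfl | rfl
  · rcases mem_insert.1 hA with rfl | hA
    · rw [erase_insert (hP.notMem_of_mem hx hc (hP.sup_mem hc))]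
      exact hP.sup_mem hc
    · rwa [erase_eq_of_notMem (hP.notMem_of_mem hx hc hA)]
  · obtain ⟨B, hB, rfl⟩ := mem_image.1 hA
    rw [erase_insert (hP.notMem_of_mem hx hc (mem_of_mem_erase hB))]
    exact mem_of_mem_erase hB

theorem isChain_chainStep (hP : IsSymmetricChainDecomposition s P) :
    ∀ C ∈ chainStep x P, IsChain (· ⊆ ·) (C : Set (Finset γ)) := by
  intro C hC
  obtain ⟨-, c, hc, rfl | rfl⟩ := mem_chainStep.1 hC
  · rw [coe_insert]
    exact (hP.isChain c hc).insert fun B hB _ =>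
      Or.inr ((le_sup (f := id) hB).trans (subset_insert _ _))
  · rw [coe_image]
    exact ((hP.isChain c hc).mono (by simp)).image_of_map_rel _ _ _
      fun _ _ h => insert_subset_insert x h

theorem sup_ne_iff_card_ne (hP : IsSymmetricChainDecomposition s P) (hc : c ∈ P) {l : ℕ}
    (hl : c.image card = Icc l (#s - l)) {B : Finset γ} (hB : B ∈ c) :
    B ≠ c.sup id ↔ #B ≠ #s - l := by
  rw [← hP.card_sup hc hl, not_iff_not]
  exact ⟨fun h => h ▸ rfl, (hP.isChain c hc).eq_of_card_eq hB (hP.sup_mem hc)⟩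

theorem image_card_insert_sup (hP : IsSymmetricChainDecomposition s P) (hx : x ∉ s)
    (hc : c ∈ P) {l : ℕ} (hl : c.image card = Icc l (#s - l)) (hls : 2 * l ≤ #s) :
    (insert (insert x (c.sup id)) c).image card = Icc l (#(insert x s) - l) := by
  rw [image_insert, hl, card_insert_of_notMem (hP.notMem_of_mem hx hc (hP.sup_mem hc)),
    hP.card_sup hc hl, card_insert_of_notMem hx]
  ext j
  simp only [mem_insert, mem_Icc]
  omega

theorem image_card_image_insert_erase_sup (hP : IsSymmetricChainDecomposition s P)
    (hx : x ∉ s) (hc : c ∈ P) {l : ℕ} (hl : c.image card = Icc l (#s - l)) :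
    ((c.erase (c.sup id)).image (insert x)).image card = Icc (l + 1) (#(insert x s) - (l + 1)) := by
  have hmem : ∀ i, (∃ B ∈ c, #B = i) ↔ l ≤ i ∧ i ≤ #s - l := by simp [← mem_Icc, ← hl]
  rw [card_insert_of_notMem hx]
  ext j
  simp only [mem_image, mem_erase, mem_Icc]
  constructor
  · rintro ⟨_, ⟨B, ⟨hBt, hB⟩, rfl⟩, rfl⟩
    have := (hmem _).1 ⟨B, hB, rfl⟩
    have := (hP.sup_ne_iff_card_ne hc hl hB).1 hBt
    rw [card_insert_of_notMem (hP.notMem_of_mem hx hc hB)]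
    omega
  · intro hj
    obtain ⟨B, hB, hBj⟩ := (hmem (j - 1)).2 (by omega)
    refine ⟨insert x B, ⟨B, ⟨(hP.sup_ne_iff_card_ne hc hl hB).2 (by omega), hB⟩, rfl⟩, ?_⟩
    rw [card_insert_of_notMem (hP.notMem_of_mem hx hc hB)]
    omega

theorem image_card_chainStep (hP : IsSymmetricChainDecomposition s P) (hx : x ∉ s) :
    ∀ C ∈ chainStep x P, ∃ l, 2 * l ≤ #(insert x s) ∧ C.image card = Icc l (#(insert x s) - l) := by
  intro C hC
  obtain ⟨hCne, c, hc, rfl | rfl⟩ := mem_chainStep.1 hC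
  all_goals obtain ⟨l, hls, hl⟩ := hP.image_card c hc
  · exact ⟨l, by rw [card_insert_of_notMem hx]; omega, hP.image_card_insert_sup hx hc hl hls⟩
  · refine ⟨l + 1, ?_, hP.image_card_image_insert_erase_sup hx hc hl⟩
    have hne : (Icc (l + 1) (#(insert x s) - (l + 1))).Nonempty :=
      hP.image_card_image_insert_erase_sup hx hc hl ▸ hCne.image card
    rw [nonempty_Icc, card_insert_of_notMem hx] at hne
    rw [card_insert_of_notMem hx]
    omega

theorem subset_chainStep (hP : IsSymmetricChainDecomposition s P) :
    ∀ C ∈ chainStep x P, ∀ A ∈ C, A ⊆ insert x s := by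
  intro C hC A hA
  obtain ⟨-, c, hc, rfl | rfl⟩ := mem_chainStep.1 hC
  · rcases mem_insert.1 hA with rfl | hA
    · exact insert_subset_insert x (hP.subset c hc _ (hP.sup_mem hc))
    · exact (hP.subset c hc A hA).trans (subset_insert x s)
  · obtain ⟨B, hB, rfl⟩ := mem_image.1 hA
    exact insert_subset_insert x (hP.subset c hc B (mem_of_mem_erase hB))

theorem exists_mem_chainStep (hP : IsSymmetricChainDecomposition s P) :
    ∀ A ⊆ insert x s, ∃ C ∈ chainStep x P, A ∈ C := by
  intro A hA
  by_cases hxA : x ∈ A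
  · obtain ⟨c, hc, hAc⟩ := hP.exists_mem (A.erase x) (by simpa [subset_insert_iff] using hA)
    by_cases htop : A.erase x = c.sup id
    · refine ⟨_, mem_chainStep.2 ⟨insert_nonempty _ _, c, hc, Or.inl rfl⟩, ?_⟩
      rw [← htop, insert_erase hxA]
      exact mem_insert_self _ _
    · have : A ∈ (c.erase (c.sup id)).image (insert x) :=
        mem_image.2 ⟨A.erase x, mem_erase.2 ⟨htop, hAc⟩, insert_erase hxA⟩
      exact ⟨_, mem_chainStep.2 ⟨⟨A, this⟩, c, hc, Or.inr rfl⟩, this⟩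
  · obtain ⟨c, hc, hAc⟩ := hP.exists_mem A (by simpa [subset_insert_iff_of_notMem hxA] using hA)
    exact ⟨_, mem_chainStep.2 ⟨insert_nonempty _ _, c, hc, Or.inl rfl⟩, mem_insert_of_mem hAc⟩

theorem eq_of_mem_chainStep (hP : IsSymmetricChainDecomposition s P) (hx : x ∉ s) :
    ∀ C ∈ chainStep x P, ∀ C' ∈ chainStep x P, ∀ A ∈ C, A ∈ C' → C = C' := by
  intro C hC C' hC' A hAC hAC'
  obtain ⟨-, c, hc, hCc⟩ := mem_chainStep.1 hC
  obtain ⟨-, c', hc', hCc'⟩ := mem_chainStep.1 hC'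
  obtain rfl : c = c' := hP.eq_of_mem c hc c' hc' _
    (hP.erase_mem_of_mem hx hc hCc hAC) (hP.erase_mem_of_mem hx hc' hCc' hAC')
  suffices ¬ (A ∈ insert (insert x (c.sup id)) c ∧ A ∈ (c.erase (c.sup id)).image (insert x)) by
    rcases hCc with rfl | rfl <;> rcases hCc' with rfl | rfl <;> tauto
  rintro ⟨hA₁, hA₂⟩
  obtain ⟨B, hB, rfl⟩ := mem_image.1 hA₂
  have hxB := hP.notMem_of_mem hx hc (mem_of_mem_erase hB)
  rcases mem_insert.1 hA₁ with h | h
  · have := congrArg (·.erase x) h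
    simp only [erase_insert hxB, erase_insert (hP.notMem_of_mem hx hc (hP.sup_mem hc))] at this
    exact (ne_of_mem_erase hB) this
  · exact hP.notMem_of_mem hx hc h (mem_insert_self x B)

protected theorem insert (hP : IsSymmetricChainDecomposition s P) (hx : x ∉ s) :
    IsSymmetricChainDecomposition (insert x s) (chainStep x P) where
  isChain := hP.isChain_chainStep
  image_card := hP.image_card_chainStep hx
  subset := hP.subset_chainStep
  exists_mem := hP.exists_mem_chainStep
  eq_of_mem := hP.eq_of_mem_chainStep hx

end IsSymmetricChainDecomposition

theorem exists_isSymmetricChainDecomposition (s : Finset γ) :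
    ∃ P, IsSymmetricChainDecomposition s P := by
  induction s using Finset.induction_on with
  | empty =>
    refine ⟨{{∅}}, ⟨?_, ?_, ?_, ?_, ?_⟩⟩ <;> simp
  | insert x s hx ih =>
    obtain ⟨P, hP⟩ := ih
    exact ⟨_, hP.insert hx⟩

end SymmetricChainDecomposition

/-! ### Supersaturation -/

theorem card_le_card_image_add_card_filter_lt {β ι : Type*} [PartialOrder β] [DecidableEq β]
    [DecidableLT β] [DecidableEq ι] (ch : β → ι) (hch : ∀ a b, ch a = ch b → a ≤ b ∨ b ≤ a)
    (F : Finset β) : #F ≤ #(F.image ch) + #{p ∈ F ×ˢ F | p.1 < p.2 ∧ ch p.1 = ch p.2} := by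
  induction F using Finset.induction_on with
  | empty => simp
  | insert a F ha ih =>
    have hmono : {p ∈ F ×ˢ F | p.1 < p.2 ∧ ch p.1 = ch p.2} ⊆
        {p ∈ insert a F ×ˢ insert a F | p.1 < p.2 ∧ ch p.1 = ch p.2} :=
      filter_subset_filter _ (product_subset_product (subset_insert _ _) (subset_insert _ _))
    rw [card_insert_of_notMem ha, image_insert]
    by_cases h : ∃ b ∈ F, ch b = ch a
    · obtain ⟨b, hb, hba⟩ := h
      have hab : a ≠ b := fun h => ha (h ▸ hb)
      have hlt : {p ∈ F ×ˢ F | p.1 < p.2 ∧ ch p.1 = ch p.2} ⊂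
          {p ∈ insert a F ×ˢ insert a F | p.1 < p.2 ∧ ch p.1 = ch p.2} := by
        refine (ssubset_iff_of_subset hmono).2 ?_
        rcases hch a b hba.symm with h | h
        · exact ⟨(a, b), by simp [hb, lt_of_le_of_ne h hab, hba], by simp [ha]⟩
        · exact ⟨(b, a), by simp [hb, lt_of_le_of_ne h hab.symm, hba], by simp [ha]⟩
      have := card_lt_card hlt
      rw [insert_eq_of_mem (mem_image.2 ⟨b, hb, hba⟩)]
      omega
    · rw [card_insert_of_notMem (by simpa using h)]
      have := card_le_card hmono
      omega

theorem Finset.exists_perm_smul_eq_smul_eq {γ : Type*} [DecidableEq γ] {A A' B : Finset γ}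
    (hA : A ⊆ B) (hA' : A' ⊆ B) (h : #A = #A') :
    ∃ τ : Equiv.Perm γ, τ • A = A' ∧ τ • B = B := by
  have hmap : ∀ (g : Equiv.Perm B) (S : Finset B),
      Equiv.Perm.ofSubtype g • S.map (Function.Embedding.subtype (· ∈ B)) =
        (g • S).map (Function.Embedding.subtype (· ∈ B)) := by
    intro g S
    simp only [smul_finset_def, map_eq_image, image_image]
    congr 1
    funext x
    simp [Equiv.Perm.smul_def, Equiv.Perm.ofSubtype_apply_coe]
  have := Set.powersetCard.isPretransitive (α := B) (n := #A)
  obtain ⟨g, hg⟩ := MulAction.exists_smul_eq (Equiv.Perm B)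
    (⟨A.subtype (· ∈ B), by simp [Set.powersetCard, card_subtype, filter_true_of_mem hA]⟩ :
      Set.powersetCard B #A)
    ⟨A'.subtype (· ∈ B), by simp [Set.powersetCard, card_subtype, filter_true_of_mem hA', h]⟩
  refine ⟨Equiv.Perm.ofSubtype g, ?_, ?_⟩
  · rw [← subtype_map_of_mem hA, hmap, ← subtype_map_of_mem hA']
    exact congrArg (fun S => map _ (Subtype.val S)) hg
  · have := hmap g univ
    rwa [smul_finset_univ, univ_eq_attach, attach_map_val] at this

section Supersaturation

variable {γ ι : Type*} [Fintype γ] [DecidableEq γ] [DecidableEq ι]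

theorem exists_chain_partition : ∃ ch : Finset γ → Finset (Finset γ),
    (∀ A B, ch A = ch B → A ⊆ B ∨ B ⊆ A) ∧
      #(univ.image ch) ≤ (Fintype.card γ).choose (Fintype.card γ / 2) := by
  obtain ⟨P, hP⟩ := exists_isSymmetricChainDecomposition (univ : Finset γ)
  choose ch hchP hAch using fun A : Finset γ => hP.exists_mem A (subset_univ A)
  refine ⟨ch, fun A B h => (hP.isChain _ (hchP A)).total (hAch A) (h ▸ hAch B), ?_⟩
  calc #(univ.image ch) ≤ #P := card_le_card (image_subset_iff.2 fun A _ => hchP A)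
    _ ≤ _ := by simpa using hP.card_le_choose

theorem choose_card_mul_card_filter_smul_le (ch : Finset γ → ι)
    (hch : ∀ A B, ch A = ch B → A ⊆ B ∨ B ⊆ A) {A B : Finset γ} (hAB : A ⊆ B) :
    (#B).choose #A * #{σ : Equiv.Perm γ | ch (σ • A) = ch (σ • B)} ≤ (Fintype.card γ)! := by
  set S := powersetCard #A B
  -- a permutation fixing `B` carries `A` to any `A' ∈ S`
  have hconst : ∀ A' ∈ S, #{σ : Equiv.Perm γ | ch (σ • A') = ch (σ • B)} =
      #{σ : Equiv.Perm γ | ch (σ • A) = ch (σ • B)} := by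
    intro A' hA'
    rw [mem_powersetCard] at hA'
    obtain ⟨τ, rfl, hτB⟩ := exists_perm_smul_eq_smul_eq hAB hA'.1 hA'.2.symm
    refine card_equiv (Equiv.mulRight τ) fun σ => ?_
    simp [mul_smul, hτB]
  have hle_one : ∀ σ : Equiv.Perm γ, #{A' ∈ S | ch (σ • A') = ch (σ • B)} ≤ 1 := by
    intro σ
    refine card_le_one.2 fun A₁ h₁ A₂ h₂ => ?_
    simp only [S, mem_filter, mem_powersetCard] at h₁ h₂
    refine MulAction.injective σ ?_
    rcases hch _ _ (h₁.2.trans h₂.2.symm) with h | h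
    · exact eq_of_subset_of_card_le h (by simp [h₁.1.2, h₂.1.2])
    · exact (eq_of_subset_of_card_le h (by simp [h₁.1.2, h₂.1.2])).symm
  calc (#B).choose #A * #{σ : Equiv.Perm γ | ch (σ • A) = ch (σ • B)}
      = ∑ A' ∈ S, #{σ : Equiv.Perm γ | ch (σ • A') = ch (σ • B)} := by
        rw [sum_congr rfl hconst, sum_const, card_powersetCard, smul_eq_mul]
    _ = ∑ σ : Equiv.Perm γ, #{A' ∈ S | ch (σ • A') = ch (σ • B)} :=
        sum_card_bipartiteAbove_eq_sum_card_bipartiteBelow (fun A' σ => ch (σ • A') = ch (σ • B))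
    _ ≤ ∑ _σ : Equiv.Perm γ, 1 := sum_le_sum fun σ _ => hle_one σ
    _ = (Fintype.card γ)! := by simp [Fintype.card_perm]

theorem card_mul_le_card_mul_choose_add_card_filter_lt (W : Finset (Finset γ))
    (hW : ∀ A ∈ W, Fintype.card γ < 4 * #A) :
    Fintype.card γ * #W ≤ Fintype.card γ * (Fintype.card γ).choose (Fintype.card γ / 2) +
      4 * #{p ∈ W ×ˢ W | p.1 < p.2} := by
  set n := Fintype.card γ
  set pairs := {p ∈ W ×ˢ W | p.1 < p.2}
  obtain ⟨ch, hch, hP⟩ := exists_chain_partition (γ := γ)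
  set N := fun p : Finset γ × Finset γ => #{σ : Equiv.Perm γ | ch (σ • p.1) = ch (σ • p.2)}
  have hσ : ∀ σ : Equiv.Perm γ,
      #W ≤ n.choose (n / 2) + #{p ∈ pairs | ch (σ • p.1) = ch (σ • p.2)} := by
    intro σ
    have := card_le_card_image_add_card_filter_lt (fun A => ch (σ • A))
      (fun A B h => by simpa [smul_finset_subset_smul_finset_iff] using hch _ _ h) W
    rw [filter_filter]
    refine this.trans (Nat.add_le_add_right ?_ _)
    exact (card_le_card (image_subset_iff.2 fun A _ => mem_image_of_mem ch (mem_univ _))).trans hP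
  have hpair : ∀ p ∈ pairs, n * N p ≤ 4 * n ! := by
    intro p hp
    simp only [pairs, mem_filter, mem_product] at hp
    have hn : n ≤ 4 * (#p.2).choose #p.1 := by
      have := hW _ hp.1.1
      have hlt := card_lt_card hp.2
      have := Nat.le_choose_of_pos_of_lt (by omega) hlt
      omega
    calc n * N p ≤ 4 * (#p.2).choose #p.1 * N p := Nat.mul_le_mul_right _ hn
      _ = 4 * ((#p.2).choose #p.1 * N p) := by ring
      _ ≤ 4 * n ! := Nat.mul_le_mul_left _ (choose_card_mul_card_filter_smul_le ch hch hp.2.le)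
  have hcount : ∑ σ : Equiv.Perm γ, #{p ∈ pairs | ch (σ • p.1) = ch (σ • p.2)} =
      ∑ p ∈ pairs, N p :=
    sum_card_bipartiteAbove_eq_sum_card_bipartiteBelow _
  refine Nat.le_of_mul_le_mul_left ?_ (Nat.factorial_pos n)
  calc n ! * (n * #W) = n * ∑ _σ : Equiv.Perm γ, #W := by simp [Fintype.card_perm, n]; ring
    _ ≤ n * ∑ σ : Equiv.Perm γ,
          (n.choose (n / 2) + #{p ∈ pairs | ch (σ • p.1) = ch (σ • p.2)}) :=
        Nat.mul_le_mul_left _ (sum_le_sum fun σ _ => hσ σ)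
    _ = n ! * (n * n.choose (n / 2)) + ∑ p ∈ pairs, n * N p := by
        rw [sum_add_distrib, hcount, mul_add, mul_sum pairs, sum_const, card_univ,
          Fintype.card_perm, smul_eq_mul]
        ring
    _ ≤ n ! * (n * n.choose (n / 2)) + ∑ _p ∈ pairs, 4 * n ! :=
        Nat.add_le_add_left (sum_le_sum hpair) _
    _ = n ! * (n * n.choose (n / 2) + 4 * #pairs) := by rw [sum_const, smul_eq_mul]; ring

end Supersaturation

/-! ### Embedding trees of height two -/

theorem Finset.exists_subset_forall_le_card_filter {α β : Type*} (r : α → β → Prop)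
    [DecidableRel r] (k : ℕ) (s : Finset α) (t : Finset β)
    (h : k * (#s + #t) < #{p ∈ s ×ˢ t | r p.1 p.2}) :
    ∃ s' ⊆ s, ∃ t' ⊆ t, s'.Nonempty ∧ (∀ a ∈ s', k ≤ #{b ∈ t' | r a b}) ∧
      ∀ b ∈ t', k ≤ #{a ∈ s' | r a b} := by
  classical
  induction hn : #s + #t using Nat.strong_induction_on generalizing s t with
  | _ n ih =>
  have hrows : ∀ s : Finset α, #{p ∈ s ×ˢ t | r p.1 p.2} = ∑ a ∈ s, #{b ∈ t | r a b} := by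
    intro s; simp only [card_filter, sum_product]
  have hcols : ∀ t : Finset β, #{p ∈ s ×ˢ t | r p.1 p.2} = ∑ b ∈ t, #{a ∈ s | r a b} := by
    intro t; rw [card_filter, sum_product_right]; simp only [card_filter]
  -- delete a vertex of degree `< k`: the edge count drops by less than `k`
  by_cases hs : ∃ a ∈ s, #{b ∈ t | r a b} < k
  · obtain ⟨a, ha, hlt⟩ := hs
    have := add_sum_erase s (fun a => #{b ∈ t | r a b}) ha
    have := card_erase_add_one ha
    obtain ⟨s', hs', t', ht', h'⟩ :=
      ih _ (by omega) (s.erase a) t (by rw [hrows] at h ⊢; nlinarith) rfl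
    exact ⟨s', hs'.trans (erase_subset _ _), t', ht', h'⟩
  by_cases ht : ∃ b ∈ t, #{a ∈ s | r a b} < k
  · obtain ⟨b, hb, hlt⟩ := ht
    have := add_sum_erase t (fun b => #{a ∈ s | r a b}) hb
    have := card_erase_add_one hb
    obtain ⟨s', hs', t', ht', h'⟩ :=
      ih _ (by omega) s (t.erase b) (by rw [hcols] at h ⊢; nlinarith) rfl
    exact ⟨s', hs', t', ht'.trans (erase_subset _ _), h'⟩
  push Not at hs ht
  refine ⟨s, subset_rfl, t, subset_rfl, nonempty_iff_ne_empty.2 fun hs => ?_, hs, ht⟩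
  simp [hs] at h

theorem Function.Injective.dite_compl_singleton {V β : Type*} [DecidableEq V] {v : V}
    {f : ({v}ᶜ : Set V) → β} (hf : Injective f) {z : β} (hz : ∀ w, f w ≠ z) :
    Injective fun w => if h : w = v then z else f ⟨w, h⟩ := by
  intro w w' h
  by_cases hw : w = v <;> by_cases hw' : w' = v <;>
    simp only [hw, hw', dite_true, dite_false] at h
  · exact hw.trans hw'.symm
  · exact absurd h.symm (hz _)
  · exact absurd h (hz _)
  · exact congrArg Subtype.val (hf h)

namespace SimpleGraph

variable {V β : Type*} [Fintype V] [DecidableEq β] {G : SimpleGraph V} {c : V → Bool}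
  {r : β → β → Prop} [DecidableRel r] {M : Bool → Finset β} {k : ℕ}

theorem exists_extend_of_leaf (hc : ∀ ⦃u v⦄, G.Adj u v → c u ≠ c v) (hk : Fintype.card V ≤ k)
    (h₀ : ∀ x ∈ M false, k ≤ #{y ∈ M true | r x y})
    (h₁ : ∀ y ∈ M true, k ≤ #{x ∈ M false | r x y}) {u v : V} (hvu : G.Adj v u)
    (hu : ∀ w, G.Adj v w → w = u) (f : ({v}ᶜ : Set V) → β) (hf : Injective f)
    (hfM : ∀ w : ({v}ᶜ : Set V), f w ∈ M (c w))
    (hfr : ∀ ⦃w w'⦄, (G.induce {v}ᶜ).Adj w w' → c w = false → r (f w) (f w')) :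
    ∃ g : V → β, Injective g ∧ (∀ w, g w ∈ M (c w)) ∧
      ∀ ⦃w w'⦄, G.Adj w w' → c w = false → r (g w) (g w') := by
  classical
  have huv : u ≠ v := hvu.ne'
  have hused : #(univ.image f) < k := by
    have : Fintype.card ({v}ᶜ : Set V) < Fintype.card V := by
      simpa [filter_ne'] using Fintype.card_pos_iff.2 ⟨v⟩
    exact (card_image_le.trans_lt (by simpa using this)).trans_le hk
  -- `f u` has at least `k` admissible partners, fewer than `k` of which are used
  obtain ⟨z, hzM, hzf, hz⟩ : ∃ z ∈ M (c v), z ∉ univ.image f ∧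
      (c v = true → r (f ⟨u, huv⟩) z) ∧ (c v = false → r z (f ⟨u, huv⟩)) := by
    have hcu := hc hvu
    cases hcv : c v
    · have : c u = true := by revert hcu; rw [hcv]; cases c u <;> simp
      obtain ⟨z, hz, hzf⟩ := exists_mem_notMem_of_card_lt_card
        (hused.trans_le (h₁ _ (by simpa [this] using hfM ⟨u, huv⟩)))
      exact ⟨z, (mem_filter.1 hz).1, hzf, by simp, fun _ => (mem_filter.1 hz).2⟩
    · have : c u = false := by revert hcu; rw [hcv]; cases c u <;> simp
      obtain ⟨z, hz, hzf⟩ := exists_mem_notMem_of_card_lt_card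
        (hused.trans_le (h₀ _ (by simpa [this] using hfM ⟨u, huv⟩)))
      exact ⟨z, (mem_filter.1 hz).1, hzf, fun _ => (mem_filter.1 hz).2, by simp⟩
  refine ⟨fun w => if h : w = v then z else f ⟨w, h⟩,
    hf.dite_compl_singleton fun w h => hzf (h ▸ mem_image_of_mem _ (mem_univ _)), fun w => ?_, ?_⟩
  · by_cases hw : w = v
    · subst hw; simpa using hzM
    · simpa [hw] using hfM ⟨w, hw⟩
  · intro w w' h hcw
    by_cases hw : w = v
    · subst hw
      obtain rfl := hu _ h
      simpa [huv] using hz.2 hcw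
    by_cases hw' : w' = v
    · subst hw'
      obtain rfl := hu _ h.symm
      have : c w' = true := by have := hc h; cases h' : c w' <;> simp_all
      simpa [huv] using hz.1 this
    simpa [hw, hw'] using hfr (w := ⟨w, hw⟩) (w' := ⟨w', hw'⟩) h hcw

theorem IsTree.exists_injective_of_le_card (hG : G.IsTree) (hc : ∀ ⦃u v⦄, G.Adj u v → c u ≠ c v)
    (hk : Fintype.card V ≤ k) (h₀ : ∀ x ∈ M false, k ≤ #{y ∈ M true | r x y})
    (h₁ : ∀ y ∈ M true, k ≤ #{x ∈ M false | r x y}) (hne : (M false).Nonempty) :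
    ∃ f : V → β, Injective f ∧ (∀ v, f v ∈ M (c v)) ∧
      ∀ ⦃u v⦄, G.Adj u v → c u = false → r (f u) (f v) := by
  classical
  induction hn : Fintype.card V generalizing V with
  | zero =>
    have := hG.connected.nonempty
    exact absurd hn Fintype.card_ne_zero
  | succ m ih =>
    rcases subsingleton_or_nontrivial V with hV | hV
    · obtain ⟨v⟩ := hG.connected.nonempty
      obtain ⟨z, hz⟩ : (M (c v)).Nonempty := by
        cases c v
        · exact hne
        · obtain ⟨x, hx⟩ := hne
          have : 0 < #{y ∈ M true | r x y} := by have := h₀ x hx; omega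
          exact (card_pos.1 this).mono (filter_subset _ _)
      refine ⟨fun _ => z, injective_of_subsingleton _, fun w => Subsingleton.elim v w ▸ hz, ?_⟩
      exact fun u w huw => absurd (Subsingleton.elim u w) huw.ne
    obtain ⟨v, hv⟩ := hG.exists_vert_degree_one_of_nontrivial
    obtain ⟨u, hvu, hu⟩ := degree_eq_one_iff_existsUnique_adj.1 hv
    have hG' : (G.induce {v}ᶜ).IsTree :=
      ⟨hG.connected.induce_compl_singleton_of_degree_eq_one hv, hG.isAcyclic.induce _⟩
    obtain ⟨f, hf, hfM, hfr⟩ := ih (G := G.induce {v}ᶜ) hG' (c := fun w => c w) (fun _ _ h => hc h)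
      (by simp [filter_ne']; omega) (by simp [filter_ne', hn])
    exact exists_extend_of_leaf hc hk h₀ h₁ hvu hu f hf hfM hfr

end SimpleGraph

namespace HasHeight

variable {α : Type*} [PartialOrder α]

theorem false_of_lt_of_lt (hh : HasHeight α 2) {a b c : α} (hab : a < b) (hbc : b < c) :
    False := by
  classical
  have hchain : IsChain (· ≤ ·) (({a, b, c} : Finset α) : Set α) := by
    simp only [coe_insert, coe_singleton]
    refine (Set.subsingleton_singleton.isChain.insert ?_).insert ?_
    · rintro _ rfl -
      exact Or.inl hbc.le
    · rintro _ (rfl | rfl) -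
      exacts [Or.inl hab.le, Or.inl (hab.trans hbc).le]
  have := hh.2 _ hchain
  rw [card_insert_of_notMem (by simp [hab.ne, (hab.trans hbc).ne]), card_pair hbc.ne] at this
  omega

theorem isMin_of_lt (hh : HasHeight α 2) {a b : α} (h : a < b) : IsMin a :=
  fun _ hx => hx.lt_or_eq.elim (fun hxa => (hh.false_of_lt_of_lt hxa h).elim) ge_of_eq

theorem covBy_of_lt (hh : HasHeight α 2) {a b : α} (h : a < b) : a ⋖ b :=
  ⟨h, fun _ hac hcb => hh.false_of_lt_of_lt hac hcb⟩

theorem exists_injective_strictMono [Fintype α] {β : Type*} [PartialOrder β] [DecidableEq β]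
    [DecidableLT β] (htree : (SimpleGraph.hasse α).IsTree) (hh : HasHeight α 2)
    {M₀ M₁ : Finset β} (h₀ : ∀ x ∈ M₀, Fintype.card α ≤ #{y ∈ M₁ | x < y})
    (h₁ : ∀ y ∈ M₁, Fintype.card α ≤ #{x ∈ M₀ | x < y}) (hne : M₀.Nonempty) :
    ∃ f : α → β, Injective f ∧ (∀ a, f a ∈ M₀ ∪ M₁) ∧ StrictMono f := by
  classical
  have hc : ∀ ⦃a b⦄, (SimpleGraph.hasse α).Adj a b →
      decide (¬IsMin a) ≠ decide (¬IsMin b) := by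
    rintro a b (h | h) <;> simp [hh.isMin_of_lt h.lt, not_isMin_of_lt h.lt]
  obtain ⟨f, hf, hfM, hfr⟩ := htree.exists_injective_of_le_card
    (c := fun a => decide (¬IsMin a)) (r := (· < ·)) (M := fun i => cond i M₁ M₀)
    hc le_rfl h₀ h₁ hne
  refine ⟨f, hf, fun a => ?_, fun a b hab =>
    hfr (Or.inl (hh.covBy_of_lt hab)) (by simp [hh.isMin_of_lt hab])⟩
  have := hfM a
  by_cases ha : IsMin a <;> simp_all

end HasHeight

theorem exists_injective_strictMono_of_card_mul_le {α : Type*} [Fintype α] [PartialOrder α]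
    (htree : (SimpleGraph.hasse α).IsTree) (hh : HasHeight α 2) {n : ℕ}
    (hn : 16 * Fintype.card α ≤ n) (𝓕 : Finset (Finset (Fin n)))
    (h𝓕 : (n + 16 * Fintype.card α + 33) * n.choose (n / 2) ≤ n * #𝓕) :
    ∃ f : α → Finset (Fin n), Injective f ∧ (∀ a, f a ∈ 𝓕) ∧ StrictMono f := by
  set k := Fintype.card α
  set C := n.choose (n / 2)
  set W := {A ∈ 𝓕 | ¬#A ≤ n / 4}
  set X := #{p ∈ W ×ˢ W | p.1 < p.2}
  have hk : 0 < k := @Fintype.card_pos _ _ htree.connected.nonempty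
  have hC : 0 < C := Nat.choose_pos (Nat.div_le_self n 2)
  have hsplit : #𝓕 ≤ #{A : Finset (Fin n) | #A ≤ n / 4} + #W := by
    rw [← card_filter_add_card_filter_not (s := 𝓕) (fun A => #A ≤ n / 4)]
    exact Nat.add_le_add_right (card_le_card (filter_subset_filter _ (subset_univ _))) _
  have htail := card_mul_card_filter_card_le_div_four_le (Fin n)
  have hsuper := card_mul_le_card_mul_choose_add_card_filter_lt W fun A hA => by
    simp only [W, mem_filter, Fintype.card_fin] at hA ⊢
    omega
  simp only [Fintype.card_fin] at htail hsuper
  -- discarding the small sets leaves `n |W| ≥ (n + 16 k + 1) C`; compare with `hsuper`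
  have hX : 4 * k * C < X := by
    have := Nat.mul_le_mul_left n hsplit
    nlinarith
  have hXk : k * (#W + #W) < X := by
    refine Nat.lt_of_mul_lt_mul_left (a := n) ?_
    have := Nat.mul_le_mul_left (2 * k) hsuper
    have := Nat.mul_le_mul_right X hn
    have := Nat.mul_lt_mul_of_pos_left hX (by omega : 0 < n)
    nlinarith
  obtain ⟨M₀, hM₀, M₁, hM₁, hne, h₀, h₁⟩ :=
    exists_subset_forall_le_card_filter (· < ·) k W W hXk
  obtain ⟨f, hf, hfM, hmono⟩ := hh.exists_injective_strictMono htree h₀ h₁ hne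
  refine ⟨f, hf, fun a => ?_, hmono⟩
  rcases mem_union.1 (hfM a) with h | h
  exacts [(mem_filter.1 (hM₀ h)).1, (mem_filter.1 (hM₁ h)).1]

theorem add_mul_le_mul_of_one_add_div_mul_le {n c C m : ℕ} (hn : 1 ≤ n)
    (h : (1 + (c : ℝ) / n) * C ≤ m) : (n + c) * C ≤ n * m := by
  have hn' : (0 : ℝ) < n := by exact_mod_cast hn
  have : (((n + c) * C : ℕ) : ℝ) ≤ ((n * m : ℕ) : ℝ) := by
    push_cast
    calc ((n : ℝ) + c) * C = n * ((1 + c / n) * C) := by field_simp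
      _ ≤ n * m := mul_le_mul_of_nonneg_left h hn'.le
  exact_mod_cast this

/-- If a finite poset `P` has Hasse diagram a tree and height `2`, then there is a
constant `c(P)` such that every family `𝓕 ⊆ 2^[n]` with
`|𝓕| ≥ (1 + c/n)·C(n,⌊n/2⌋)` contains `P` as a (not necessarily induced) subposet:
an injection `f : P → 𝓕` with `a ≤ b → f a ⊆ f b`. -/
theorem stmt_8 (α : Type) [Fintype α] [PartialOrder α]
    (htree : (SimpleGraph.hasse α).IsTree) (hh : HasHeight α 2) :
    ∃ c : ℝ, ∀ n : ℕ, 1 ≤ n → ∀ 𝓕 : Finset (Finset (Fin n)),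
      (1 + c / n) * (n.choose (n / 2) : ℝ) ≤ (𝓕.card : ℝ) →
      ∃ f : α → Finset (Fin n), Function.Injective f ∧ (∀ a, f a ∈ 𝓕) ∧
        ∀ a b : α, a ≤ b → f a ⊆ f b := by
  set k := Fintype.card α
  -- `c ≥ n 2ⁿ` for `n < 16 k` makes the hypothesis void there
  set c : ℕ := 16 * k * 2 ^ (16 * k) + 16 * k + 33
  refine ⟨c, fun n hn 𝓕 h𝓕 => ?_⟩
  have h𝓕' : (n + c) * n.choose (n / 2) ≤ n * #𝓕 := add_mul_le_mul_of_one_add_div_mul_le hn h𝓕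
  by_cases hsmall : n < 16 * k
  · have h2n : n * #𝓕 ≤ n * 2 ^ n := Nat.mul_le_mul_left n (by simpa using card_le_univ 𝓕)
    have : n * 2 ^ n ≤ 16 * k * 2 ^ (16 * k) :=
      Nat.mul_le_mul hsmall.le (Nat.pow_le_pow_right two_pos hsmall.le)
    have : c ≤ (n + c) * n.choose (n / 2) :=
      (Nat.le_add_left c n).trans (Nat.le_mul_of_pos_right _ (Nat.choose_pos (Nat.div_le_self n 2)))
    omega
  · obtain ⟨f, hf, hf𝓕, hmono⟩ := exists_injective_strictMono_of_card_mul_le htree hh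
      (not_lt.1 hsmall) 𝓕 ((Nat.mul_le_mul_right _ (by omega)).trans h𝓕')
    exact ⟨f, hf, hf𝓕, fun a b hab => hmono.monotone hab⟩
end

section
/- If a maximal chain M in 2^[n] is generated by removing elements of [n] one at a time uniformly at random, then conditioned on the chain so far having reached a set T₀ with |T₀| ≥ n/4, the probability that any fixed set F ⊊ T₀ with |F| ≥ n/4 appears in M is at most 1/(|F|+1) ≤ 4/n. -/
open Finset

/-- The maximal chain in `2^[n]` associated to a permutation `σ`.  Generating a maximal
chain by removing elements of `[n]` one at a time uniformly at random is the same as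
choosing `σ` uniformly among all `n!` permutations. -/
def mchain (n : ℕ) (σ : Equiv.Perm (Fin n)) : Finset (Finset (Fin n)) :=
  (Finset.range (n + 1)).image (fun i => Finset.univ.filter (fun j => ((σ.symm j : ℕ) < i)))

lemma card_filter_val_lt (n i : ℕ) (h : i ≤ n) :
    (Finset.univ.filter (fun m : Fin n => (m:ℕ) < i)).card = i := by
  have key : (Finset.univ.filter (fun m : Fin n => (m:ℕ) < i)).map Fin.valEmbedding
      = Finset.range i := by
    ext m
    simp only [Finset.mem_map, mem_filter, mem_univ, true_and, Finset.mem_range,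
      Fin.valEmbedding_apply]
    constructor
    · rintro ⟨a, ha, rfl⟩; exact ha
    · intro hm; exact ⟨⟨m, lt_of_lt_of_le hm h⟩, hm, rfl⟩
  simpa using congrArg Finset.card key

lemma card_filter_symm_lt {n : ℕ} (σ : Equiv.Perm (Fin n)) (i : ℕ) (h : i ≤ n) :
    (Finset.univ.filter (fun j : Fin n => ((σ.symm j : ℕ) < i))).card = i := by
  have h1 : Finset.univ.filter (fun j : Fin n => ((σ.symm j : ℕ) < i)) =
      (Finset.univ.filter (fun m : Fin n => (m : ℕ) < i)).map σ.toEmbedding := by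
    ext j
    simp only [mem_filter, mem_univ, true_and, Finset.mem_map, Equiv.coe_toEmbedding]
    constructor
    · intro hj; exact ⟨σ.symm j, hj, by simp⟩
    · rintro ⟨m, hm, rfl⟩; simpa using hm
  rw [h1, Finset.card_map, card_filter_val_lt n i h]

lemma mem_mchain_iff {n : ℕ} (σ : Equiv.Perm (Fin n)) (T : Finset (Fin n)) :
    T ∈ mchain n σ ↔ ∀ j, j ∈ T ↔ ((σ.symm j : ℕ) < T.card) := by
  constructor
  · rintro hT
    simp only [mchain, Finset.mem_image, Finset.mem_range] at hT
    obtain ⟨i, hi, rfl⟩ := hT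
    rw [card_filter_symm_lt σ i (Nat.lt_succ_iff.mp hi)]
    intro j; simp
  · intro h
    simp only [mchain, Finset.mem_image, Finset.mem_range]
    refine ⟨T.card, ?_, ?_⟩
    · have := Finset.card_le_univ T
      simp only [Finset.card_univ, Fintype.card_fin] at this
      omega
    · ext j; simp [← h j]

lemma apply_mem_iff {n : ℕ} (σ : Equiv.Perm (Fin n)) (F : Finset (Fin n))
    (h : ∀ j, j ∈ F ↔ ((σ.symm j : ℕ) < F.card)) (x : Fin n) :
    σ x ∈ F ↔ (x : ℕ) < F.card := by
  rw [h (σ x)]; simp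

/-- The key "recover `k`" lemma: among the first `f+1` positions of `σ * swap k f`,
the unique one holding an element outside `F` is position `k`. -/
lemma spot {n : ℕ} (F : Finset (Fin n)) (σ : Equiv.Perm (Fin n)) {f : ℕ} (hfn : f < n)
    (hFf : F.card = f)
    (hFσ : ∀ j, j ∈ F ↔ ((σ.symm j : ℕ) < F.card))
    (k : ℕ) (hk : k ≤ f) (m : ℕ) (hm : m ≤ f) :
    ((σ * Equiv.swap (⟨k, lt_of_le_of_lt hk hfn⟩ : Fin n) (⟨f, hfn⟩ : Fin n))
        ⟨m, lt_of_le_of_lt hm hfn⟩ ∉ F ↔ m = k) := by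
  have hap : (σ * Equiv.swap (⟨k, lt_of_le_of_lt hk hfn⟩ : Fin n) (⟨f, hfn⟩ : Fin n))
        ⟨m, lt_of_le_of_lt hm hfn⟩
      = σ (Equiv.swap (⟨k, lt_of_le_of_lt hk hfn⟩ : Fin n) (⟨f, hfn⟩ : Fin n)
        ⟨m, lt_of_le_of_lt hm hfn⟩) := rfl
  rw [hap, apply_mem_iff σ F hFσ, hFf]
  by_cases hmk : m = k
  · have : (⟨m, lt_of_le_of_lt hm hfn⟩ : Fin n) = ⟨k, lt_of_le_of_lt hk hfn⟩ := Fin.ext hmk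
    rw [this, Equiv.swap_apply_left]
    simp [hmk]
  · have hne : (⟨m, lt_of_le_of_lt hm hfn⟩ : Fin n) ≠ ⟨k, lt_of_le_of_lt hk hfn⟩ :=
      fun hcon => hmk (by simpa [Fin.ext_iff] using hcon)
    by_cases hmf : m = f
    · have : (⟨m, lt_of_le_of_lt hm hfn⟩ : Fin n) = ⟨f, hfn⟩ := Fin.ext hmf
      rw [this, Equiv.swap_apply_right]
      have hkf : k < f := lt_of_le_of_ne hk (fun hcon => hmk (hmf.trans hcon.symm))
      simp [hkf, hmk]
    · have hne2 : (⟨m, lt_of_le_of_lt hm hfn⟩ : Fin n) ≠ ⟨f, hfn⟩ :=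
        fun hcon => hmf (by simpa [Fin.ext_iff] using hcon)
      rw [Equiv.swap_apply_of_ne_of_ne hne hne2]
      have : m < f := lt_of_le_of_ne hm hmf
      simp [this, hmk]

/-- Conditioned on a uniformly random maximal chain `M` passing through `T₀` with
`|T₀| ≥ n/4`, the probability that a fixed `F ⊊ T₀` with `|F| ≥ n/4` lies on `M` is at
most `1/(|F|+1) ≤ 4/n`. -/
theorem stmt_13 (n : ℕ) (hn : 1 ≤ n) (T₀ F : Finset (Fin n))
    (hFT : F ⊂ T₀) (hF : (n : ℝ) / 4 ≤ (F.card : ℝ)) (hT : (n : ℝ) / 4 ≤ (T₀.card : ℝ)) :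
    ((Finset.univ.filter
        (fun σ : Equiv.Perm (Fin n) => T₀ ∈ mchain n σ ∧ F ∈ mchain n σ)).card : ℝ) /
      ((Finset.univ.filter (fun σ : Equiv.Perm (Fin n) => T₀ ∈ mchain n σ)).card : ℝ)
        ≤ 1 / ((F.card : ℝ) + 1) ∧
    1 / ((F.card : ℝ) + 1) ≤ 4 / (n : ℝ) := by
  set f := F.card with hf
  set t := T₀.card with ht
  have hft : f < t := Finset.card_lt_card hFT
  have htn : t ≤ n := by
    have := Finset.card_le_univ T₀
    simpa using this
  have hfn : f < n := lt_of_lt_of_le hft htn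
  set A := Finset.univ.filter (fun σ : Equiv.Perm (Fin n) => T₀ ∈ mchain n σ) with hA
  set B := Finset.univ.filter
      (fun σ : Equiv.Perm (Fin n) => T₀ ∈ mchain n σ ∧ F ∈ mchain n σ) with hB
  have hBA : B ⊆ A := by
    intro σ h
    rw [hB, Finset.mem_filter] at h
    rw [hA, Finset.mem_filter]
    exact ⟨h.1, h.2.1⟩
  -- the counting inequality
  have key : (f + 1) * B.card ≤ A.card := by
    have hminlt : ∀ k : ℕ, min k f < n := fun k => lt_of_le_of_lt (min_le_right _ _) hfn
    set g : ℕ × Equiv.Perm (Fin n) → Equiv.Perm (Fin n) :=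
      fun p => p.2 * Equiv.swap (⟨min p.1 f, hminlt p.1⟩ : Fin n) (⟨f, hfn⟩ : Fin n) with hg
    have hgeq : ∀ (k : ℕ) (hk : k ≤ f) (σ : Equiv.Perm (Fin n)),
        g ⟨k, σ⟩ = σ * Equiv.swap (⟨k, lt_of_le_of_lt hk hfn⟩ : Fin n) (⟨f, hfn⟩ : Fin n) := by
      intro k hk σ
      have : (⟨min k f, hminlt k⟩ : Fin n) = ⟨k, lt_of_le_of_lt hk hfn⟩ :=
        Fin.ext (min_eq_left hk)
      simp [hg, this]
    have hmaps : ∀ p ∈ (Finset.range (f + 1)) ×ˢ B, g p ∈ A := by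
      rintro ⟨k, σ⟩ hp
      rw [Finset.mem_product, Finset.mem_range] at hp
      have hk : k ≤ f := Nat.lt_succ_iff.mp hp.1
      have hσB := hp.2
      rw [hB, Finset.mem_filter] at hσB
      have hT₀σ := (mem_mchain_iff σ T₀).mp hσB.2.1
      rw [hA, Finset.mem_filter]
      refine ⟨Finset.mem_univ _, ?_⟩
      rw [hgeq k hk σ]
      set ak : Fin n := ⟨k, lt_of_le_of_lt hk hfn⟩ with hak
      set b : Fin n := ⟨f, hfn⟩ with hb
      rw [mem_mchain_iff]
      intro j
      have hsymm : (σ * Equiv.swap ak b).symm j = Equiv.swap ak b (σ.symm j) := by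
        simp [Equiv.Perm.mul_def, Equiv.symm_trans_apply]
      rw [hsymm, ← ht, hT₀σ j, ← ht]
      constructor
      · intro hj
        by_cases h1 : σ.symm j = ak
        · rw [h1, Equiv.swap_apply_left]
          simpa [hb] using hft
        · by_cases h2 : σ.symm j = b
          · rw [h2, Equiv.swap_apply_right]
            simpa [hak] using lt_of_le_of_lt hk hft
          · rw [Equiv.swap_apply_of_ne_of_ne h1 h2]; exact hj
      · intro hj
        by_contra hcon
        have h1 : σ.symm j ≠ ak := by
          intro h
          have hv : ((σ.symm j : Fin n) : ℕ) = k := congrArg Fin.val h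
          omega
        have h2 : σ.symm j ≠ b := by
          intro h
          have hv : ((σ.symm j : Fin n) : ℕ) = f := congrArg Fin.val h
          omega
        rw [Equiv.swap_apply_of_ne_of_ne h1 h2] at hj
        exact hcon hj
    have hinj : Set.InjOn g ↑((Finset.range (f + 1)) ×ˢ B) := by
      rintro ⟨k, σ⟩ hp ⟨k', σ'⟩ hq heq
      rw [Finset.mem_coe, Finset.mem_product, Finset.mem_range] at hp hq
      have hk : k ≤ f := Nat.lt_succ_iff.mp hp.1
      have hk' : k' ≤ f := Nat.lt_succ_iff.mp hq.1
      have hσB := hp.2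
      have hσB' := hq.2
      rw [hB, Finset.mem_filter] at hσB hσB'
      have hFσ := (mem_mchain_iff σ F).mp hσB.2.2
      have hFσ' := (mem_mchain_iff σ' F).mp hσB'.2.2
      rw [hgeq k hk σ, hgeq k' hk' σ'] at heq
      have hkk' : k' = k := by
        have h1 := spot F σ hfn rfl hFσ k hk k' hk'
        have h2 := spot F σ' hfn rfl hFσ' k' hk' k' hk'
        rw [← heq] at h2
        exact h1.mp (h2.mpr rfl)
      subst hkk'
      have hσσ : σ = σ' := mul_right_cancel heq
      rw [hσσ]
    have hle := Finset.card_le_card_of_injOn g hmaps hinj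
    rwa [Finset.card_product, Finset.card_range] at hle
  constructor
  · rcases Nat.eq_zero_or_pos A.card with h0 | hpos
    · have hB0 : B.card = 0 := le_antisymm (h0 ▸ Finset.card_le_card hBA) (Nat.zero_le _)
      rw [hB0, h0]
      simp
      positivity
    · rw [div_le_div_iff₀ (by exact_mod_cast hpos) (by positivity)]
      have hkey : ((f : ℝ) + 1) * (B.card : ℝ) ≤ (A.card : ℝ) := by exact_mod_cast key
      nlinarith [hkey]
  · have hn0 : (0:ℝ) < n := by exact_mod_cast hn
    rw [div_le_div_iff₀ (by positivity) hn0]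
    have : (n : ℝ) ≤ 4 * f := by linarith
    linarith
end

section
/- Let P be a finite poset whose Hasse diagram is a tree and let h = h(P). Then the union of any h distinct levels of the poset Mon(ℤ) of eventually monotone functions contains P as a subposet; consequently l(P) = h(P) - 1. -/
/-- `Mon(ℤ)`: eventually monotone 0–1 functions on `ℤ` — functions `f : ℤ → Bool` with
`f n = true` for all large `n` and `f n = false` for all small `n`, ordered pointwise. -/
def MonZ : Type :=
  {f : ℤ → Bool // (∃ N : ℤ, ∀ n ≥ N, f n = true) ∧ (∃ N : ℤ, ∀ n ≤ N, f n = false)}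

noncomputable instance : PartialOrder MonZ := Subtype.partialOrder _

/-- `Σ_n (f(n) - g(n))`, a well-defined integer for `f, g ∈ Mon(ℤ)` (the summand has
finite support). -/
noncomputable def MonZ.diff (f g : MonZ) : ℤ :=
  ∑ᶠ n : ℤ, ((if f.1 n then (1 : ℤ) else 0) - (if g.1 n then (1 : ℤ) else 0))

/-- A level of `Mon(ℤ)`: a maximal subfamily on which `Σ_n (f(n)-g(n)) = 0` for all
pairs. -/
def IsLevel (L : Set MonZ) : Prop :=
  (∀ f ∈ L, ∀ g ∈ L, MonZ.diff f g = 0) ∧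
    ∀ L' : Set MonZ, L ⊆ L' → (∀ f ∈ L', ∀ g ∈ L', MonZ.diff f g = 0) → L' = L

/-!
The levels of `Mon(ℤ)` are the sets `{f | Σ (f - base) = k}`, and each is an antichain, so a
chain of `h` elements cannot be placed in `h - 1` levels. Conversely, given `h` levels, a
strictly monotone rank `κ` of `P` into their indices exists because `P` has height `h`, and
`a` is sent to the indicator of `F a ∪ [K, ∞)`, where the finite sets `F a ⊆ (-∞, K)` have
the sizes `κ a + K` forced by the levels, are nested along covering pairs and are pairwise
distinct. For a tree such sets are built vertex by vertex in order of distance from a root: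
a new vertex has exactly one earlier neighbour `u`, and its set is either `F u` plus fresh
points or one of the `C(|F u|, k) > k` subsets of `F u` of the right size `k` not used yet.
-/
open Finset

namespace MonZ

def ind (f : MonZ) (n : ℤ) : ℤ := if f.1 n then 1 else 0

lemma diff_eq_finsum (f g : MonZ) : diff f g = ∑ᶠ n, (ind f n - ind g n) := rfl

lemma finite_support_ind_sub (f g : MonZ) :
    (Function.support fun n => ind f n - ind g n).Finite := by
  obtain ⟨⟨Nf, hNf⟩, ⟨Mf, hMf⟩⟩ := f.2
  obtain ⟨⟨Ng, hNg⟩, ⟨Mg, hMg⟩⟩ := g.2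
  refine (Set.finite_Icc (min Mf Mg) (max Nf Ng)).subset fun n hn => ?_
  by_contra hout
  rw [Set.mem_Icc, not_and_or, not_le, not_le] at hout
  refine hn ?_
  rcases hout with hlt | hlt
  · simp [ind, hMf n (by omega), hMg n (by omega)]
  · simp [ind, hNf n (by omega), hNg n (by omega)]

lemma diff_add_diff (f g k : MonZ) : diff f g + diff g k = diff f k := by
  rw [diff_eq_finsum, diff_eq_finsum, diff_eq_finsum,
    ← finsum_add_distrib (finite_support_ind_sub f g) (finite_support_ind_sub g k)]
  exact finsum_congr fun n => by ring

lemma diff_self (f : MonZ) : diff f f = 0 := by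
  simpa using diff_add_diff f f f

lemma diff_swap (f g : MonZ) : diff g f = -diff f g := by
  linarith [diff_add_diff f g f, diff_self f]

lemma ind_mono {f g : MonZ} (h : f ≤ g) (n : ℤ) : ind f n ≤ ind g n := by
  have hn : f.1 n ≤ g.1 n := h n
  unfold ind
  revert hn
  cases f.1 n <;> cases g.1 n <;> decide

lemma diff_pos_of_lt {f g : MonZ} (hlt : f < g) : 0 < diff g f := by
  obtain ⟨n, hn⟩ : ∃ n, f.1 n ≠ g.1 n := by
    by_contra! h
    exact hlt.ne (Subtype.ext (funext h))
  refine finsum_pos (fun n => sub_nonneg.mpr (ind_mono hlt.le n)) ⟨n, ?_⟩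
    (finite_support_ind_sub g f)
  have hle : f.1 n ≤ g.1 n := hlt.le n
  revert hn hle
  cases f.1 n <;> cases g.1 n <;> decide

def ofFinset (K : ℤ) (F : Finset ℤ) : MonZ :=
  ⟨fun n => decide (K ≤ n ∨ n ∈ F), ⟨K, fun n hn => by simp [hn]⟩, by
    obtain ⟨m, hm⟩ := F.bddBelow
    refine ⟨min K m - 1, fun n hn => ?_⟩
    have hK : ¬ K ≤ n := by omega
    have hF : n ∉ F := fun hnF => by have := hm hnF; omega
    simp [hK, hF]⟩

lemma ofFinset_apply (K : ℤ) (F : Finset ℤ) (n : ℤ) :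
    (ofFinset K F).1 n = decide (K ≤ n ∨ n ∈ F) := rfl

lemma ofFinset_mono {K : ℤ} {F F' : Finset ℤ} (h : F ⊆ F') : ofFinset K F ≤ ofFinset K F' :=
  fun n => by
    simp only [ofFinset_apply, Bool.le_iff_imp, decide_eq_true_eq]
    exact Or.imp_right (@h n)

lemma eq_of_ofFinset_eq {K : ℤ} {F F' : Finset ℤ} (hF : ∀ x ∈ F, x < K) (hF' : ∀ x ∈ F', x < K)
    (h : ofFinset K F = ofFinset K F') : F = F' := by
  ext n
  have hn := congrFun (congrArg Subtype.val h) n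
  simp only [ofFinset_apply, decide_eq_decide] at hn
  constructor
  · intro hnF
    exact (hn.mp (Or.inr hnF)).resolve_left (not_le.mpr (hF n hnF))
  · intro hnF
    exact (hn.mpr (Or.inr hnF)).resolve_left (not_le.mpr (hF' n hnF))

lemma diff_ofFinset_empty {K : ℤ} {F : Finset ℤ} (hF : ∀ x ∈ F, x < K) :
    diff (ofFinset K F) (ofFinset K ∅) = #F := by
  have hpt : ∀ n, ind (ofFinset K F) n - ind (ofFinset K ∅) n = if n ∈ F then 1 else 0 := by
    intro n
    by_cases hn : n ∈ F
    · have : ¬ K ≤ n := not_le.mpr (hF n hn)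
      simp [ind, ofFinset_apply, hn, this]
    · by_cases hK : K ≤ n <;> simp [ind, ofFinset_apply, hn, hK]
  rw [diff_eq_finsum, finsum_congr hpt, finsum_eq_sum_of_support_subset (s := F)]
  · simp
  · intro n hn
    simpa using hn

lemma ofFinset_Ico {K K' : ℤ} (h : K ≤ K') : ofFinset K' (Ico K K') = ofFinset K ∅ := by
  apply Subtype.ext
  funext n
  simp only [ofFinset_apply, Finset.mem_Ico, Finset.notMem_empty, or_false]
  congr 1
  apply propext
  omega

lemma diff_ofFinset_empty_empty (K K' : ℤ) :
    diff (ofFinset K ∅) (ofFinset K' ∅) = K' - K := by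
  wlog h : K ≤ K' generalizing K K'
  · rw [diff_swap, this K' K (by omega)]
    ring
  rw [← ofFinset_Ico h, diff_ofFinset_empty (fun x hx => (Finset.mem_Ico.mp hx).2),
    Int.card_Ico]
  omega

def base : MonZ := ofFinset 0 ∅

def level (k : ℤ) : Set MonZ := {f | diff f base = k}

lemma ofFinset_mem_level {K : ℤ} {F : Finset ℤ} (hF : ∀ x ∈ F, x < K) :
    ofFinset K F ∈ level (#F - K) := by
  have := diff_add_diff (ofFinset K F) (ofFinset K ∅) base
  rw [diff_ofFinset_empty hF, base, diff_ofFinset_empty_empty] at this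
  change diff _ (ofFinset 0 ∅) = _
  omega

lemma ofFinset_mem_level_neg (k : ℤ) : ofFinset (-k) ∅ ∈ level k := by
  simpa using ofFinset_mem_level (K := -k) (F := ∅) (by simp)

lemma diff_eq_zero_of_mem_level {k : ℤ} {f g : MonZ} (hf : f ∈ level k) (hg : g ∈ level k) :
    diff f g = 0 := by
  have := diff_add_diff f base g
  rw [diff_swap g base] at this
  change diff f base = k at hf
  change diff g base = k at hg
  omega

lemma isLevel_level (k : ℤ) : IsLevel (level k) := by
  refine ⟨fun f hf g hg => diff_eq_zero_of_mem_level hf hg, fun L' hsub hL' => ?_⟩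
  refine (Set.Subset.antisymm_iff.mpr ⟨fun f hf => ?_, hsub⟩)
  have hg := hsub (ofFinset_mem_level_neg k)
  have := diff_add_diff f (ofFinset (-k) ∅) base
  rw [hL' f hf _ hg, ofFinset_mem_level_neg k] at this
  change _ = _
  omega

lemma IsLevel.eq_level {L : Set MonZ} (hL : IsLevel L) {g : MonZ} (hg : g ∈ L) :
    L = level (diff g base) := by
  refine (hL.2 _ (fun f hf => ?_) (isLevel_level _).1).symm
  have := diff_add_diff f g base
  rw [hL.1 f hf g hg] at this
  change _ = _
  omega

lemma isLevel_iff {L : Set MonZ} : IsLevel L ↔ ∃ k, L = level k := by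
  refine ⟨fun hL => ?_, by rintro ⟨k, rfl⟩; exact isLevel_level k⟩
  by_cases hne : L.Nonempty
  · obtain ⟨g, hg⟩ := hne
    exact ⟨_, IsLevel.eq_level hL hg⟩
  · rw [Set.not_nonempty_iff_eq_empty] at hne
    subst hne
    exact absurd (hL.2 (level 0) (Set.empty_subset _) (isLevel_level 0).1)
      (Set.nonempty_iff_ne_empty.mp ⟨_, ofFinset_mem_level_neg 0⟩)

lemma level_injective : Function.Injective level := fun k k' h => by
  have hk := ofFinset_mem_level_neg k
  rw [h] at hk
  exact (ofFinset_mem_level_neg k).symm.trans hk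

lemma eq_of_le_of_mem_level {k : ℤ} {f g : MonZ} (hf : f ∈ level k) (hg : g ∈ level k)
    (hle : f ≤ g) : f = g := by
  by_contra hne
  exact (diff_pos_of_lt (lt_of_le_of_ne hle hne)).ne' (diff_eq_zero_of_mem_level hg hf)

end MonZ

namespace SimpleGraph

lemma IsTree.eq_of_adj_of_dist_le {V : Type*} {G : SimpleGraph V} (hG : G.IsTree) (r : V)
    {v w₁ w₂ : V} (h₁ : G.Adj w₁ v) (h₂ : G.Adj w₂ v) (hd₁ : G.dist r w₁ ≤ G.dist r v)
    (hd₂ : G.dist r w₂ ≤ G.dist r v) : w₁ = w₂ := by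
  classical
  obtain ⟨p, hp, -⟩ := hG.existsUnique_path r v
  suffices key : ∀ w, G.Adj w v → G.dist r w ≤ G.dist r v → w = p.penultimate from
    (key w₁ h₁ hd₁).trans (key w₂ h₂ hd₂).symm
  intro w hwv hdw
  have hlt : G.dist r w < G.dist r v := lt_of_le_of_ne hdw (hG.dist_ne_of_adj r hwv)
  obtain ⟨q, hq, hqw⟩ := (hG.connected r w).exists_path_of_dist
  have hvq : v ∉ q.support := fun hv => by
    have := (dist_le (q.takeUntil v hv)).trans (q.length_takeUntil_le_length hv)
    omega
  exact hG.isAcyclic.eq_penultimate_of_adj_end hp hwv.symm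
    (hG.isAcyclic.mem_support_of_ne_mem_support_of_adj_of_isPath hp hq hwv.symm hvq)

end SimpleGraph

lemma Set.Infinite.exists_finset_disjoint_card_eq {β : Type*} {S : Set β} (hS : S.Infinite)
    (u : Finset β) (k : ℕ) : ∃ t : Finset β, ↑t ⊆ S ∧ Disjoint t u ∧ #t = k := by
  obtain ⟨t, htS, htk⟩ := (hS.sdiff u.finite_toSet).exists_subset_card_eq k
  exact ⟨t, fun x hx => (htS hx).1,
    Finset.disjoint_left.mpr fun x hx hxu => (htS hx).2 hxu, htk⟩

lemma Finset.exists_subset_card_eq_notMem {β : Type*} {A : Finset β} {𝒰 : Finset (Finset β)}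
    {k : ℕ} (hk : k < #A) (h𝒰 : #𝒰 ≤ k) : ∃ T ⊆ A, #T = k ∧ T ∉ 𝒰 := by
  have hchoose : #𝒰 < #(A.powersetCard k) := by
    rw [card_powersetCard]
    calc #𝒰 < k + 1 := Nat.lt_succ_of_le h𝒰
      _ = (k + 1).choose k := (Nat.choose_succ_self_right k).symm
      _ ≤ (#A).choose k := Nat.choose_le_choose k hk
  obtain ⟨T, hT, hT𝒰⟩ := exists_mem_notMem_of_card_lt_card hchoose
  exact ⟨T, (mem_powersetCard.mp hT).1, (mem_powersetCard.mp hT).2, hT𝒰⟩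

section SetLabelling

variable {V β : Type*} (R : V → V → Prop) (S : Set β) (sz : V → ℕ)

def IsSetLabelling (s : Finset V) (F : V → Finset β) : Prop :=
  Set.InjOn F s ∧ (∀ a ∈ s, ↑(F a) ⊆ S ∧ #(F a) = sz a) ∧ ∀ a ∈ s, ∀ b ∈ s, R a b → F a ⊆ F b

variable {R S sz} {s : Finset V} {F : V → Finset β} {v : V}

lemma isSetLabelling_empty (F : V → Finset β) : IsSetLabelling R S sz ∅ F := by
  simp [IsSetLabelling]

lemma IsSetLabelling.update_insert [DecidableEq V]
    (hF : IsSetLabelling R S sz s F) (hv : v ∉ s) {T : Finset β} (hTS : ↑T ⊆ S)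
    (hT : #T = sz v) (hne : ∀ a ∈ s, F a ≠ T) (hin : ∀ a ∈ s, R a v → F a ⊆ T)
    (hout : ∀ a ∈ s, R v a → T ⊆ F a) :
    IsSetLabelling R S sz (insert v s) (Function.update F v T) := by
  have hupd : ∀ a ∈ s, Function.update F v T a = F a := fun a ha =>
    Function.update_of_ne (ne_of_mem_of_not_mem ha hv) _ _
  obtain ⟨hinj, hsize, hmono⟩ := hF
  refine ⟨?_, ?_, ?_⟩
  · rw [coe_insert, Set.injOn_insert (by simpa using hv), Function.update_self]
    refine ⟨fun a ha b hb hab => hinj ha hb ?_, fun ⟨a, ha, hav⟩ => hne a ha ?_⟩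
    · rwa [hupd a ha, hupd b hb] at hab
    · rwa [hupd a ha] at hav
  · simp only [mem_insert, forall_eq_or_imp, Function.update_self]
    exact ⟨⟨hTS, hT⟩, fun a ha => hupd a ha ▸ hsize a ha⟩
  · simp only [mem_insert, forall_eq_or_imp, Function.update_self]
    refine ⟨⟨fun _ => subset_rfl, fun b hb hvb => (hupd b hb).symm ▸ hout b hb hvb⟩,
      fun a ha => ⟨fun hav => (hupd a ha).symm ▸ hin a ha hav, fun b hb hab => ?_⟩⟩
    rw [hupd a ha, hupd b hb]
    exact hmono a ha b hb hab

lemma IsSetLabelling.exists_insert_above [DecidableEq V] [DecidableEq β]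
    (hF : IsSetLabelling R S sz s F) (hS : S.Infinite) (hv : v ∉ s) {B : Finset β}
    (hBS : ↑B ⊆ S) (hB : #B < sz v) (hin : ∀ a ∈ s, R a v → F a ⊆ B)
    (hout : ∀ a ∈ s, ¬ R v a) : ∃ F', IsSetLabelling R S sz (insert v s) F' := by
  obtain ⟨t, htS, htdisj, htcard⟩ :=
    hS.exists_finset_disjoint_card_eq (B ∪ s.biUnion F) (sz v - #B)
  obtain ⟨x, hxt⟩ : t.Nonempty := by rw [← card_pos]; omega
  refine ⟨_, hF.update_insert hv (T := B ∪ t) (coe_union B t ▸ Set.union_subset hBS htS) ?_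
    (fun a ha hFa => ?_) (fun a ha hav => (hin a ha hav).trans subset_union_left)
    (fun a ha hva => absurd hva (hout a ha))⟩
  · rw [card_union_of_disjoint (disjoint_union_left.mp htdisj.symm).1]
    omega
  · have hxF : x ∈ F a := hFa ▸ mem_union_right B hxt
    exact disjoint_left.mp htdisj hxt (mem_union_right B (mem_biUnion.mpr ⟨a, ha, hxF⟩))

lemma IsSetLabelling.exists_insert_below [DecidableEq V] (hF : IsSetLabelling R S sz s F)
    (hv : v ∉ s) (hcard : #s ≤ sz v) {u : V} (hu : u ∈ s) (hlt : sz v < sz u)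
    (hin : ∀ a ∈ s, ¬ R a v) (hout : ∀ a ∈ s, R v a → a = u) :
    ∃ F', IsSetLabelling R S sz (insert v s) F' := by
  classical
  obtain ⟨T, hTu, hTcard, hTnew⟩ := exists_subset_card_eq_notMem (A := F u) (𝒰 := s.image F)
    ((hF.2.1 u hu).2 ▸ hlt) (card_image_le.trans hcard)
  refine ⟨_, hF.update_insert hv ((coe_subset.mpr hTu).trans (hF.2.1 u hu).1) hTcard
    (fun a ha hFa => hTnew (mem_image.mpr ⟨a, ha, hFa⟩)) (fun a ha hav => absurd hav (hin a ha))
    (fun a ha hva => hout a ha hva ▸ hTu)⟩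

lemma IsSetLabelling.exists_insert [DecidableEq V] (hF : IsSetLabelling R S sz s F)
    (hS : S.Infinite) (hv : v ∉ s) (hcard : #s < sz v) (hsz : ∀ a b, R a b → sz a < sz b)
    (hnbr : ∀ a ∈ s, ∀ b ∈ s, (R a v ∨ R v a) → (R b v ∨ R v b) → a = b) :
    ∃ F', IsSetLabelling R S sz (insert v s) F' := by
  classical
  by_cases hex : ∃ u ∈ s, R u v ∨ R v u
  · obtain ⟨u, hu, huv | hvu⟩ := hex
    · refine hF.exists_insert_above hS hv (hF.2.1 u hu).1 ((hF.2.1 u hu).2 ▸ hsz u v huv)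
        (fun a ha hav => ?_) (fun a ha hva => ?_)
      · rw [hnbr a ha u hu (.inl hav) (.inl huv)]
      · obtain rfl := hnbr a ha u hu (.inr hva) (.inl huv)
        exact lt_asymm (hsz _ _ huv) (hsz _ _ hva)
    · refine hF.exists_insert_below hv hcard.le hu (hsz v u hvu) (fun a ha hav => ?_)
        (fun a ha hva => hnbr a ha u hu (.inr hva) (.inr hvu))
      obtain rfl := hnbr a ha u hu (.inl hav) (.inr hvu)
      exact lt_asymm (hsz _ _ hav) (hsz _ _ hvu)
  · push Not at hex
    exact hF.exists_insert_above hS hv (B := ∅) (by simp)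
      (by simpa using (Nat.zero_le _).trans_lt hcard)
      (fun a ha hav => absurd hav (hex a ha).1) (fun a ha => (hex a ha).2)

end SetLabelling

lemma SimpleGraph.IsTree.exists_isSetLabelling {V β : Type*} [Fintype V] {G : SimpleGraph V}
    (hG : G.IsTree) {R : V → V → Prop} (hR : ∀ u v, G.Adj u v ↔ R u v ∨ R v u) {S : Set β}
    (hS : S.Infinite) {sz : V → ℕ} (hcard : ∀ a, Fintype.card V < sz a)
    (hsz : ∀ a b, R a b → sz a < sz b) : ∃ F, IsSetLabelling R S sz univ F := by
  classical
  obtain ⟨r⟩ := hG.connected.nonempty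
  induction (univ : Finset V) using Finset.induction_on_max_value (G.dist r) with
  | empty => exact ⟨fun _ => ∅, isSetLabelling_empty _⟩
  | insert v s hv hmax ih =>
    obtain ⟨F, hF⟩ := ih
    refine hF.exists_insert hS hv ((card_lt_univ_of_notMem hv).trans (hcard v)) hsz
      fun a ha b hb hav hbv => ?_
    rw [← hR] at hav hbv
    exact hG.eq_of_adj_of_dist_le r hav hbv (hmax a ha) (hmax b hb)

lemma exists_strictMono_fin_of_forall_isChain_card_le {α : Type*} [PartialOrder α] {h : ℕ}
    (hh : ∀ c : Finset α, IsChain (· ≤ ·) (c : Set α) → #c ≤ h) :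
    ∃ φ : α → Fin h, StrictMono φ := by
  classical
  have hlen : ∀ p : LTSeries α, p.length < h := fun p => by
    have hc := hh (univ.image p) (by
      rw [coe_image, coe_univ, Set.image_univ]
      exact p.strictMono.monotone.isChain_range)
    rw [card_image_of_injective _ p.strictMono.injective, card_univ, Fintype.card_fin] at hc
    omega
  have hheight : ∀ a : α, Order.height a < h := fun a => by
    have hpos : 0 < h := hlen (RelSeries.singleton _ a)
    have hle : Order.height a ≤ (h - 1 : ℕ) :=
      Order.height_le fun p _ => by exact_mod_cast (by have := hlen p; omega : p.length ≤ h - 1)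
    exact hle.trans_lt (by exact_mod_cast (by omega : h - 1 < h))
  choose n hn using fun a => ENat.ne_top_iff_exists.mp (hheight a).ne_top
  refine ⟨fun a => ⟨n a, by exact_mod_cast hn a ▸ hheight a⟩, fun a b hab => ?_⟩
  have := Order.height_strictMono hab (hn a ▸ ENat.natCast_lt_top _)
  rw [← hn a, ← hn b] at this
  exact_mod_cast this

theorem exists_injective_monotone_mem_level {α : Type*} [Fintype α] [PartialOrder α]
    (htree : (SimpleGraph.hasse α).IsTree) {κ : α → ℤ} (hκ : StrictMono κ) :
    ∃ f : α → MonZ, Function.Injective f ∧ Monotone f ∧ ∀ a, f a ∈ MonZ.level (κ a) := by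
  classical
  obtain ⟨m, hm⟩ := (Set.finite_range κ).bddBelow
  obtain ⟨K, hK⟩ : ∃ K : ℤ, ∀ a, (Fintype.card α : ℤ) < κ a + K :=
    ⟨Fintype.card α + 1 - m, fun a => by linarith [hm (Set.mem_range_self a)]⟩
  set sz : α → ℕ := fun a => (κ a + K).toNat
  have hsz : ∀ a, (sz a : ℤ) = κ a + K := fun a => Int.toNat_of_nonneg (by linarith [hK a])
  obtain ⟨F, hinj, hsize, hcov⟩ := htree.exists_isSetLabelling (R := (· ⋖ ·))
    (fun _ _ => SimpleGraph.hasse_adj) (Set.Iio_infinite K) (sz := sz)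
    (fun a => by have := hsz a; have := hK a; omega)
    (fun a b hab => by have := hsz a; have := hsz b; have := hκ hab.lt; omega)
  have hFK : ∀ a, ∀ x ∈ F a, x < K := fun a x hx => (hsize a (mem_univ a)).1 hx
  refine ⟨fun a => MonZ.ofFinset K (F a), fun a b hab => ?_, ?_, fun a => ?_⟩
  · exact hinj (mem_univ a) (mem_univ b) (MonZ.eq_of_ofFinset_eq (hFK a) (hFK b) hab)
  · let := Fintype.toLocallyFiniteOrder (α := α)
    exact (monotone_iff_forall_covBy _).mpr fun a b hab =>
      MonZ.ofFinset_mono (hcov a (mem_univ a) b (mem_univ b) hab)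
  · convert MonZ.ofFinset_mem_level (hFK a) using 2
    rw [(hsize a (mem_univ a)).2, hsz a]
    ring

lemma not_exists_injective_monotone_mem_iUnion_level {α ι : Type*} [PartialOrder α] [Fintype ι]
    {c : Finset α} (hc : IsChain (· ≤ ·) (c : Set α)) (hcard : Fintype.card ι < #c)
    (L : ι → Set MonZ) (hL : ∀ i, IsLevel (L i)) :
    ¬ ∃ f : α → MonZ, Function.Injective f ∧ (∀ a, f a ∈ ⋃ i, L i) ∧
      ∀ a b : α, a ≤ b → f a ≤ f b := by
  rintro ⟨f, hinj, hmem, hmono⟩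
  choose ℓ hℓ using fun a => Set.mem_iUnion.mp (hmem a)
  obtain ⟨a, ha, b, hb, hab, hℓab⟩ :=
    exists_ne_map_eq_of_card_lt_of_maps_to (t := univ) hcard fun a _ => mem_univ (ℓ a)
  obtain ⟨k, hk⟩ := MonZ.isLevel_iff.mp (hL (ℓ a))
  have hfa : f a ∈ MonZ.level k := hk ▸ hℓ a
  have hfb : f b ∈ MonZ.level k := hk ▸ hℓab ▸ hℓ b
  refine hab (hinj ?_)
  rcases hc.total ha hb with hle | hle
  · exact MonZ.eq_of_le_of_mem_level hfa hfb (hmono a b hle)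
  · exact (MonZ.eq_of_le_of_mem_level hfb hfa (hmono b a hle)).symm

/-- If the Hasse diagram of a finite poset `P` of height `h` is a tree, then the union
of any `h` distinct levels of `Mon(ℤ)` contains `P` as a subposet; consequently
`l(P) = h - 1`: some `h-1` distinct levels have `P`-free union, while no `h` distinct
levels do. -/
theorem stmt_15 (α : Type) [Fintype α] [PartialOrder α] (h : ℕ)
    (hh : HasHeight α h) (htree : (SimpleGraph.hasse α).IsTree) :
    (∀ L : Fin h → Set MonZ, (∀ i, IsLevel (L i)) → Function.Injective L →
      ∃ f : α → MonZ, Function.Injective f ∧ (∀ a, f a ∈ ⋃ i, L i) ∧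
        ∀ a b : α, a ≤ b → f a ≤ f b) ∧
    (∃ L : Fin (h - 1) → Set MonZ, (∀ i, IsLevel (L i)) ∧ Function.Injective L ∧
      ¬ ∃ f : α → MonZ, Function.Injective f ∧ (∀ a, f a ∈ ⋃ i, L i) ∧
        ∀ a b : α, a ≤ b → f a ≤ f b) := by
  classical
  obtain ⟨⟨c, hc, hcard⟩, hchains⟩ := hh
  refine ⟨fun L hL hLinj => ?_, ?_⟩
  · choose k hk using fun i => MonZ.isLevel_iff.mp (hL i)
    have hkinj : Function.Injective k := fun i j hij => hLinj (by rw [hk i, hk j, hij])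
    obtain ⟨φ, hφ⟩ := exists_strictMono_fin_of_forall_isChain_card_le hchains
    have hcardk : #(univ.image k) = h := by
      rw [card_image_of_injective _ hkinj, card_univ, Fintype.card_fin]
    obtain ⟨f, hinj, hmono, hlev⟩ := exists_injective_monotone_mem_level htree
      (((univ.image k).orderEmbOfFin hcardk).strictMono.comp hφ)
    refine ⟨f, hinj, fun a => ?_, fun a b hab => hmono hab⟩
    obtain ⟨i, -, hi⟩ := mem_image.mp ((univ.image k).orderEmbOfFin_mem hcardk (φ a))
    exact Set.mem_iUnion.mpr ⟨i, hk i ▸ hi ▸ hlev a⟩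
  · obtain ⟨a⟩ := htree.connected.nonempty
    have hpos : 0 < h := hchains {a} (by simp)
    refine ⟨fun i => MonZ.level i, fun i => MonZ.isLevel_level _,
      fun i j hij => Fin.ext (by exact_mod_cast MonZ.level_injective hij),
      not_exists_injective_monotone_mem_iUnion_level hc
        (by rw [Fintype.card_fin, hcard]; omega) _
        fun i => MonZ.isLevel_level _⟩
end

section
/- If a finite poset P is saturated of height h and is embedded order-preservingly into a union L of levels L₁,…,L_h of Mon(ℤ) (ordered by increasing level), then every element of P lying at depth d from the top of some maximal chain is mapped into a specific level; in particular, for an interval I = [v,u) with P \ I saturated of height h and an embedding π of P \ I into L, the element π(u) lies in level L_{|I|+1}. -/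
-- auxiliary lemmas

lemma MonZ.support_finite (f g : MonZ) :
    (Function.support fun n => ((if f.1 n then (1 : ℤ) else 0) - (if g.1 n then (1 : ℤ) else 0))).Finite := by
  obtain ⟨⟨Nf, hNf⟩, ⟨Mf, hMf⟩⟩ := f.2
  obtain ⟨⟨Ng, hNg⟩, ⟨Mg, hMg⟩⟩ := g.2
  apply Set.Finite.subset (Set.finite_Icc (min Mf Mg) (max Nf Ng))
  intro n hn
  simp only [Set.mem_Icc]
  by_contra hc
  push_neg at hc
  rcases le_or_gt (min Mf Mg) n with h1 | h1
  · have h2 := hc h1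
    have := hNf n (le_of_lt (lt_of_le_of_lt (le_max_left _ _) h2))
    have := hNg n (le_of_lt (lt_of_le_of_lt (le_max_right _ _) h2))
    simp_all [Function.mem_support]
  · have := hMf n (le_of_lt (lt_of_lt_of_le h1 (min_le_left _ _)))
    have := hMg n (le_of_lt (lt_of_lt_of_le h1 (min_le_right _ _)))
    simp_all [Function.mem_support]

lemma MonZ.diff_anti (f g : MonZ) : MonZ.diff f g = - MonZ.diff g f := by
  unfold MonZ.diff
  rw [← finsum_neg_distrib]
  congr 1; funext n; ring

lemma MonZ.diff_self_s18 (f : MonZ) : MonZ.diff f f = 0 := by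
  unfold MonZ.diff; simp

lemma MonZ.diff_pos {f g : MonZ} (hle : f ≤ g) (hne : f ≠ g) : 0 < MonZ.diff g f := by
  classical
  obtain ⟨n₀, hn₀⟩ : ∃ n, f.1 n ≠ g.1 n := by
    by_contra hc
    push_neg at hc
    exact hne (Subtype.ext (funext hc))
  have hle' : ∀ n, f.1 n ≤ g.1 n := hle
  have key : ∀ n, (0:ℤ) ≤ (if g.1 n then (1 : ℤ) else 0) - (if f.1 n then (1 : ℤ) else 0) := by
    intro n
    have := hle' n
    rcases Bool.le_iff_imp.mp this with h
    cases hf : f.1 n <;> cases hg : g.1 n <;> simp_all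
  have hpos : (0:ℤ) < (if g.1 n₀ then (1 : ℤ) else 0) - (if f.1 n₀ then (1 : ℤ) else 0) := by
    have h1 := hle' n₀
    have h2 : f.1 n₀ = false ∧ g.1 n₀ = true := by
      revert h1 hn₀; cases f.1 n₀ <;> cases g.1 n₀ <;> simp
    simp [h2.1, h2.2]
  unfold MonZ.diff
  rw [finsum_eq_sum_of_support_subset _ (s := (MonZ.support_finite g f).toFinset)
      (by simp)]
  apply Finset.sum_pos'
  · intro i _; exact key i
  · refine ⟨n₀, ?_, hpos⟩
    simp [Function.mem_support]
    omega

lemma exists_max_chain_ext {γ : Type*} [Fintype γ] [Preorder γ]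
    (s : Finset γ) (hs : IsChain (· ≤ ·) (s : Set γ)) :
    ∃ c : Finset γ, IsMaxChainF c ∧ s ⊆ c := by
  classical
  let T : Finset (Finset γ) :=
    Finset.univ.filter (fun c => IsChain (· ≤ ·) (c : Set γ) ∧ s ⊆ c)
  have hsT : s ∈ T := by simp [T, hs]
  obtain ⟨c, hcT, hmax⟩ := Finset.exists_max_image T Finset.card ⟨s, hsT⟩
  simp only [T, Finset.mem_filter, Finset.mem_univ, true_and] at hcT
  refine ⟨c, ⟨hcT.1, ?_⟩, hcT.2⟩
  intro d hd hcd
  have hdT : d ∈ T := by simp [T, hd, hcT.2.trans hcd]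
  exact Finset.eq_of_subset_of_card_le hcd (hmax d hdT)

lemma rank_eq {γ : Type*} [PartialOrder γ] {h : ℕ} (c : Finset γ)
    (hc : IsChain (· ≤ ·) (c : Set γ)) (hcard : c.card = h)
    (ℓ : γ → Fin h) (hstrict : ∀ x ∈ c, ∀ y ∈ c, x < y → ℓ x < ℓ y)
    {x : γ} (hx : x ∈ c) [DecidablePred (· < x)] [DecidablePred (x < ·)] :
    ((ℓ x : ℕ)) = (c.filter (· < x)).card := by
  set A := c.filter (· < x) with hA
  set B := c.filter (fun y => x < y) with hB
  classical
  have hcomp : ∀ y ∈ c, y = x ∨ y < x ∨ x < y := by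
    intro y hy
    rcases eq_or_ne y x with rfl | hne
    · exact Or.inl rfl
    · rcases hc hy hx hne with h1 | h1
      · exact Or.inr (Or.inl (lt_of_le_of_ne h1 hne))
      · exact Or.inr (Or.inr (lt_of_le_of_ne h1 hne.symm))
  have hceq : c = insert x (A ∪ B) := by
    ext y
    simp only [Finset.mem_insert, Finset.mem_union, hA, hB, Finset.mem_filter]
    constructor
    · intro hy
      rcases hcomp y hy with h1 | h1 | h1
      · exact Or.inl h1
      · exact Or.inr (Or.inl ⟨hy, h1⟩)
      · exact Or.inr (Or.inr ⟨hy, h1⟩)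
    · rintro (rfl | ⟨hy, _⟩ | ⟨hy, _⟩) <;> [exact hx; exact hy; exact hy]
  have hdisj : Disjoint A B := by
    rw [Finset.disjoint_left]
    intro y hyA hyB
    simp only [hA, hB, Finset.mem_filter] at hyA hyB
    exact absurd (hyA.2.trans hyB.2) (lt_irrefl y)
  have hxA : x ∉ A ∪ B := by
    simp [hA, hB, Finset.mem_filter]
  have hsum : A.card + B.card + 1 = h := by
    have := Finset.card_insert_of_notMem hxA
    rw [← hceq] at this
    rw [Finset.card_union_of_disjoint hdisj] at this
    omega
  have hinjOn : ∀ s : Finset γ, s ⊆ c → (s.image ℓ).card = s.card := by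
    intro s hs
    apply Finset.card_image_of_injOn
    intro y hy y' hy' hℓ
    by_contra hne
    rcases hc (hs hy) (hs hy') hne with h1 | h1
    · exact absurd hℓ (ne_of_lt (hstrict _ (hs hy) _ (hs hy') (lt_of_le_of_ne h1 hne)))
    · exact absurd hℓ.symm (ne_of_lt (hstrict _ (hs hy') _ (hs hy) (lt_of_le_of_ne h1 (Ne.symm hne))))
  have hAsub : A ⊆ c := Finset.filter_subset _ _
  have hBsub : B ⊆ c := Finset.filter_subset _ _
  have hAim : A.image ℓ ⊆ Finset.Iio (ℓ x) := by
    intro i hi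
    simp only [Finset.mem_image] at hi
    obtain ⟨y, hy, rfl⟩ := hi
    simp only [hA, Finset.mem_filter] at hy
    exact Finset.mem_Iio.mpr (hstrict _ hy.1 _ hx hy.2)
  have hBim : B.image ℓ ⊆ Finset.Ioi (ℓ x) := by
    intro i hi
    simp only [Finset.mem_image] at hi
    obtain ⟨y, hy, rfl⟩ := hi
    simp only [hB, Finset.mem_filter] at hy
    exact Finset.mem_Ioi.mpr (hstrict _ hx _ hy.1 hy.2)
  have h1 : A.card ≤ (ℓ x : ℕ) := by
    have := Finset.card_le_card hAim
    rwa [hinjOn A hAsub, Fin.card_Iio] at this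
  have h2 : B.card ≤ h - 1 - (ℓ x : ℕ) := by
    have := Finset.card_le_card hBim
    rwa [hinjOn B hBsub, Fin.card_Ioi] at this
  have := (ℓ x).2
  omega

/-- Let `P` be a finite saturated poset of height `h`, `v` a minimal element, and
`I = [v,u)` a chain interval with `P ∖ I` saturated of height `h`.  If
`L₁ < L₂ < ⋯ < L_h` are distinct levels of `Mon(ℤ)` ordered by increasing level
invariant, and `π` is an order-preserving embedding of `P ∖ I` into `⋃ Lᵢ`, then
`π(u)` lies in level `L_{|I|+1}` (0-indexed: the level with index `|I|`). -/
theorem stmt_18 (α : Type) [Fintype α] [PartialOrder α] (h : ℕ)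
    (hsat : SaturatedOfHeight α h)
    (v u : α) (hvu : v < u) (hv : IsMin v)
    (I : Set α) (hI : I = Set.Ico v u) (hIchain : IsChain (· ≤ ·) I)
    (hIcard : I.ncard < h)
    (hsat' : SaturatedOfHeight ↥(Iᶜ) h)
    (L : Fin h → Set MonZ) (hlev : ∀ i, IsLevel (L i))
    (hord : ∀ i j : Fin h, i < j → ∀ fi ∈ L i, ∀ fj ∈ L j, 0 < MonZ.diff fj fi)
    (π : ↥(Iᶜ) → MonZ) (hinj : Function.Injective π)
    (hmono : ∀ a b : ↥(Iᶜ), a ≤ b → π a ≤ π b)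
    (hrange : ∀ a, π a ∈ ⋃ i, L i)
    (hu : u ∈ Iᶜ) :
    π ⟨u, hu⟩ ∈ L ⟨I.ncard, hIcard⟩ := by
  classical
  haveI : Fintype ↥(Iᶜ) := Fintype.ofFinite _
  set u' : ↥(Iᶜ) := ⟨u, hu⟩ with hu'
  -- the level function
  have hex : ∀ a, ∃ i, π a ∈ L i := fun a => Set.mem_iUnion.mp (hrange a)
  set ℓ : ↥(Iᶜ) → Fin h := fun a => (hex a).choose with hℓdef
  have hℓ : ∀ a, π a ∈ L (ℓ a) := fun a => (hex a).choose_spec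
  -- strict monotonicity of the level function
  have hstrict : ∀ a b : ↥(Iᶜ), a < b → ℓ a < ℓ b := by
    intro a b hab
    have hle : π a ≤ π b := hmono a b hab.le
    have hne : π a ≠ π b := fun e => absurd (hinj e) (ne_of_lt hab)
    have hdpos : 0 < MonZ.diff (π b) (π a) := MonZ.diff_pos hle hne
    rcases lt_trichotomy (ℓ a) (ℓ b) with h1 | h1 | h1
    · exact h1
    · exfalso
      have := (hlev (ℓ a)).1 (π b) (h1 ▸ hℓ b) (π a) (hℓ a)
      omega
    · exfalso
      have h2 := hord (ℓ b) (ℓ a) h1 (π b) (hℓ b) (π a) (hℓ a)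
      have h3 := MonZ.diff_anti (π a) (π b)
      omega
  -- a maximal chain in Iᶜ through u'
  have hsing : IsChain (· ≤ ·) (({u'} : Finset ↥(Iᶜ)) : Set ↥(Iᶜ)) := by
    simp only [Finset.coe_singleton]
    exact Set.subsingleton_singleton.isChain
  obtain ⟨c, hcmax, hcu⟩ := exists_max_chain_ext {u'} hsing
  have hu'c : u' ∈ c := hcu (Finset.mem_singleton_self u')
  have hcchain := hcmax.1
  have hccard : c.card = h := hsat'.2 c hcmax
  -- rank of u' in c equals ℓ u'
  have hrank : ((ℓ u' : ℕ)) = (c.filter (· < u')).card :=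
    rank_eq c hcchain hccard ℓ (fun x _ y _ hxy => hstrict x y hxy) hu'c
  -- now compute the rank in terms of I
  have hIfin : I.Finite := Set.toFinite I
  set Ifin : Finset α := hIfin.toFinset with hIfin'
  have hIcard' : Ifin.card = I.ncard := (Set.ncard_eq_toFinset_card I hIfin).symm
  have hmemI : ∀ a ∈ I, v ≤ a ∧ a < u := by
    intro a ha; rw [hI] at ha; exact ⟨ha.1, ha.2⟩
  have hvI : v ∈ I := by rw [hI]; exact ⟨le_refl v, hvu⟩
  -- the chain J = I ∪ (upper part of c)
  set U : Finset α := (c.filter (fun x => u ≤ x.1)).image Subtype.val with hU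
  have hUmem : ∀ z ∈ U, u ≤ z ∧ ∃ hz : z ∈ Iᶜ, (⟨z, hz⟩ : ↥(Iᶜ)) ∈ c := by
    intro z hz
    simp only [hU, Finset.mem_image, Finset.mem_filter] at hz
    obtain ⟨x, ⟨hx, hux⟩, rfl⟩ := hz
    exact ⟨hux, x.2, hx⟩
  have huU : u ∈ U := by
    simp only [hU, Finset.mem_image, Finset.mem_filter]
    exact ⟨u', ⟨hu'c, le_refl u⟩, rfl⟩
  set J : Finset α := Ifin ∪ U with hJ
  have hJchain : IsChain (· ≤ ·) (J : Set α) := by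
    intro a ha b hb hne
    simp only [hJ, Finset.coe_union, Set.mem_union, Finset.mem_coe, hIfin',
      Set.Finite.mem_toFinset] at ha hb
    rcases ha with ha | ha <;> rcases hb with hb | hb
    · exact hIchain ha hb hne
    · exact Or.inl (le_trans (hmemI a ha).2.le (hUmem b hb).1)
    · exact Or.inr (le_trans (hmemI b hb).2.le (hUmem a ha).1)
    · obtain ⟨hua, ha', hac⟩ := hUmem a ha
      obtain ⟨hub, hb', hbc⟩ := hUmem b hb
      have hne' : (⟨a, ha'⟩ : ↥(Iᶜ)) ≠ ⟨b, hb'⟩ := fun e => hne (congrArg Subtype.val e)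
      rcases hcchain hac hbc hne' with h1 | h1
      · exact Or.inl h1
      · exact Or.inr h1
  obtain ⟨F, hFmax, hJF⟩ := exists_max_chain_ext J hJchain
  have hFcard : F.card = h := hsat.2 F hFmax
  have hFchain := hFmax.1
  have hvF : v ∈ F := hJF (Finset.mem_union_left _ (hIfin.mem_toFinset.mpr hvI))
  have huF : u ∈ F := hJF (Finset.mem_union_right _ huU)
  -- lower part of F is exactly I
  have hlow : F.filter (· < u) = Ifin := by
    ext z
    simp only [Finset.mem_filter, hIfin', Set.Finite.mem_toFinset]
    constructor
    · rintro ⟨hzF, hzu⟩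
      rcases eq_or_ne z v with rfl | hne
      · exact hvI
      · rcases hFchain hzF hvF hne with h1 | h1
        · exact absurd (le_antisymm h1 (hv h1)) hne
        · rw [hI]; exact ⟨h1, hzu⟩
    · intro hz
      exact ⟨hJF (Finset.mem_union_left _ (hIfin.mem_toFinset.mpr hz)), (hmemI z hz).2⟩
  -- upper part of F is exactly U
  have hup : F.filter (fun z => u ≤ z) = U := by
    ext z
    simp only [Finset.mem_filter]
    constructor
    · rintro ⟨hzF, huz⟩
      have hzI : z ∈ Iᶜ := by
        intro hzI
        exact absurd huz (not_le_of_gt (hmemI z hzI).2)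
      set z' : ↥(Iᶜ) := ⟨z, hzI⟩ with hz'
      have hdchain : IsChain (· ≤ ·) ((insert z' c : Finset ↥(Iᶜ)) : Set ↥(Iᶜ)) := by
        intro a ha b hb hne
        simp only [Finset.coe_insert, Set.mem_insert_iff, Finset.mem_coe] at ha hb
        have key : ∀ x : ↥(Iᶜ), x ∈ c → x ≤ z' ∨ z' ≤ x := by
          intro x hx
          rcases eq_or_ne x u' with rfl | hxu
          · exact Or.inl huz
          · rcases hcchain hx hu'c hxu with h1 | h1
            · exact Or.inl (le_trans h1 huz)
            · -- u' ≤ x, so x.1 ∈ U ⊆ F, comparable with z in F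
              have hxU : x.1 ∈ U := by
                simp only [hU, Finset.mem_image, Finset.mem_filter]
                exact ⟨x, ⟨hx, h1⟩, rfl⟩
              have hxF : x.1 ∈ F := hJF (Finset.mem_union_right _ hxU)
              rcases eq_or_ne x.1 z with he | hne2
              · exact Or.inl (le_of_eq (Subtype.ext he))
              · rcases hFchain hxF hzF hne2 with h2 | h2
                · exact Or.inl h2
                · exact Or.inr h2
        rcases ha with rfl | ha <;> rcases hb with rfl | hb
        · exact absurd rfl hne
        · rcases key b hb with h1 | h1
          · exact Or.inr h1
          · exact Or.inl h1
        · exact key a ha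
        · exact hcchain ha hb hne
      have : c = insert z' c := hcmax.2 _ hdchain (Finset.subset_insert _ _)
      have hz'c : z' ∈ c := this ▸ Finset.mem_insert_self z' c
      simp only [hU, Finset.mem_image, Finset.mem_filter]
      exact ⟨z', ⟨hz'c, huz⟩, rfl⟩
    · intro hz
      exact ⟨hJF (Finset.mem_union_right _ hz), (hUmem z hz).1⟩
  -- counting in F
  have hFsplit : (F.filter (fun z => u ≤ z)).card + (F.filter (fun z => ¬ u ≤ z)).card = F.card :=
    Finset.card_filter_add_card_filter_not _
  have hFneg : F.filter (fun z => ¬ u ≤ z) = F.filter (· < u) := by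
    apply Finset.filter_congr
    intro z hzF
    constructor
    · intro hnu
      rcases eq_or_ne z u with rfl | hne
      · exact absurd le_rfl hnu
      · rcases hFchain hzF huF hne with h1 | h1
        · exact lt_of_le_of_ne h1 hne
        · exact absurd h1 hnu
    · intro hzu
      exact fun huz => absurd (le_antisymm hzu.le huz) (ne_of_lt hzu)
  have hcount1 : U.card + Ifin.card = h := by
    rw [← hup, ← hlow, ← hFneg, hFsplit, hFcard]
  -- counting in c
  have hcsplit : (c.filter (fun x => u' ≤ x)).card + (c.filter (fun x => ¬ u' ≤ x)).card = c.card :=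
    Finset.card_filter_add_card_filter_not _
  have hcneg : c.filter (fun x => ¬ u' ≤ x) = c.filter (· < u') := by
    apply Finset.filter_congr
    intro x hx
    constructor
    · intro hnu
      rcases eq_or_ne x u' with rfl | hne
      · exact absurd le_rfl hnu
      · rcases hcchain hx hu'c hne with h1 | h1
        · exact lt_of_le_of_ne h1 hne
        · exact absurd h1 hnu
    · intro hxu
      exact fun huz => absurd (le_antisymm hxu.le huz) (ne_of_lt hxu)
  have hUc : U.card = (c.filter (fun x => u' ≤ x)).card := by
    rw [hU]
    rw [Finset.card_image_of_injective _ Subtype.val_injective]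
    congr 1
  have e1 : (c.filter (fun x => u' ≤ x)).card + (c.filter (· < u')).card = h := by
    rw [← hcneg, ← hccard]; exact hcsplit
  have hfinal : (c.filter (· < u')).card = I.ncard := by
    rw [← hIcard']
    omega
  have : (ℓ u' : ℕ) = I.ncard := by rw [hrank, hfinal]
  have hℓeq : ℓ u' = ⟨I.ncard, hIcard⟩ := Fin.ext this
  rw [← hℓeq]
  exact hℓ u'
end
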